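/- arXiv:1910.05328 — 15 statements merged into one kernel-verified Lean document; each statement's English description precedes it below -/
import Mathlib

section
/- Let (X, 𝒰) be a uniform space and f : X → X continuous. If the induced map 2^f : 2^X → 2^X is uniform chain transitive (with respect to the induced uniformity 2^𝒰), then f is uniform chain transitive. -/
open Set

variable {X : Type*}

/-- The image `E[A]` of a set `A` under an entourage (relation) `E`. -/
def entImage (E : Set (X × X)) (A : Set X) : Set X := {y | ∃ a ∈ A, (a, y) ∈ E}

/-- The hyperspace relation `2^E`: `(A, B) ∈ 2^E` iff `A ⊆ E[B]` and `B ⊆ E[A]`. -/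
def hyperRel (E : Set (X × X)) (A B : Set X) : Prop :=
  A ⊆ entImage E B ∧ B ⊆ entImage E A

/-- An `E`-chain of length `m` from `x` to `y` for the map `f`. -/
def HasChain (f : X → X) (E : Set (X × X)) (m : ℕ) (x y : X) : Prop :=
  ∃ z : ℕ → X, z 0 = x ∧ z m = y ∧ ∀ i < m, (f (z i), z (i + 1)) ∈ E

/-- `f` is uniform chain transitive: every pair of points is joined by an
`E`-chain of length at least `1`, for every entourage `E`. -/
def UCT [UniformSpace X] (f : X → X) : Prop :=
  ∀ x y : X, ∀ E ∈ uniformity X, ∃ m, 1 ≤ m ∧ HasChain f E m x y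

/-- A `2^E`-chain of length `m` from `A` to `B` inside the collection `S` of subsets of `X`,
for the induced map `A ↦ f(A)`. -/
def HyperChain (f : X → X) (E : Set (X × X)) (S : Set (Set X)) (m : ℕ)
    (A B : Set X) : Prop :=
  ∃ Z : ℕ → Set X, Z 0 = A ∧ Z m = B ∧ (∀ i ≤ m, Z i ∈ S) ∧
    ∀ i < m, hyperRel E (f '' Z i) (Z (i + 1))

/-- The induced map on the hyperspace `S ⊆ 𝒫(X)` is uniform chain transitive:
any two members of `S` are joined by `2^E`-chains inside `S`, for every entourage `E`
(the sets `2^E`, `E ∈ 𝒰`, form a base of the induced uniformity `2^𝒰`). -/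
def HyperUCT [UniformSpace X] (f : X → X) (S : Set (Set X)) : Prop :=
  ∀ A ∈ S, ∀ B ∈ S, ∀ E ∈ uniformity X, ∃ m, 1 ≤ m ∧ HyperChain f E S m A B

/-- The hyperspace `2^X` of nonempty closed subsets of `X`. -/
def hyClosed [TopologicalSpace X] : Set (Set X) := {A : Set X | A.Nonempty ∧ IsClosed A}

/-- The hyperspace `F_n(X)` of nonempty subsets of `X` with at most `n` points. -/
def hyFn (X : Type*) (n : ℕ) : Set (Set X) :=
  {A : Set X | A.Nonempty ∧ A.Finite ∧ A.ncard ≤ n}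

/-- The hyperspace `F(X)` of all finite nonempty subsets of `X`. -/
def hyFin (X : Type*) : Set (Set X) := {A : Set X | A.Nonempty ∧ A.Finite}

/-- The hyperspace `C(X)` of nonempty closed connected subsets of `X`. -/
def hyConn [TopologicalSpace X] : Set (Set X) := {A : Set X | IsClosed A ∧ IsConnected A}


lemma chainBack (f : X → X) (D : Set (X × X)) :
    ∀ (m : ℕ) (Z : ℕ → Set X), (∀ i < m, hyperRel D (f '' Z i) (Z (i + 1))) →
    ∀ b ∈ Z m, ∃ z : ℕ → X, z m = b ∧ (∀ i ≤ m, z i ∈ Z i) ∧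
      ∀ i < m, (f (z i), z (i + 1)) ∈ D := by
  intro m
  induction m with
  | zero =>
    intro Z _ b hb
    refine ⟨fun _ => b, rfl, fun i hi => ?_, fun i hi => by omega⟩
    have : i = 0 := Nat.le_zero.mp hi
    subst this; exact hb
  | succ m ih =>
    intro Z hZ b hb
    obtain ⟨a, ha, hab⟩ := (hZ m (Nat.lt_succ_self m)).2 hb
    obtain ⟨a', ha', rfl⟩ := ha
    obtain ⟨z, hzm, hzmem, hzstep⟩ := ih Z (fun i hi => hZ i (by omega)) a' ha'
    refine ⟨fun i => if i = m + 1 then b else z i, by simp, ?_, ?_⟩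
    · intro i hi
      by_cases hc : i = m + 1
      · simpa [hc] using hb
      · simpa [hc] using hzmem i (by omega)
    · intro i hi
      by_cases hc : i = m
      · have h1 : m ≠ m + 1 := by omega
        rw [hc]
        simpa [h1, hzm] using hab
      · have h1 : i ≠ m + 1 := by omega
        have h2 : i + 1 ≠ m + 1 := by omega
        simpa [h1, h2, hc] using hzstep i (by omega)

lemma closure_singleton_subset_nhds [UniformSpace X] {x : X} {U : Set X}
    (hU : U ∈ nhds x) : closure {x} ⊆ U := by
  intro z hz
  obtain ⟨V, hV, hVU⟩ := UniformSpace.mem_nhds_iff.mp hU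
  obtain ⟨W, hW, hWsymm, hWV⟩ := symm_of_uniformity hV
  have : (UniformSpace.ball z W ∩ {x}).Nonempty := by
    rw [mem_closure_iff_nhds] at hz
    exact hz _ (UniformSpace.ball_mem_nhds z hW)
  obtain ⟨w, hw1, hw2⟩ := this
  rw [Set.mem_singleton_iff] at hw2
  subst hw2
  exact hVU (hWV (haveI := hWsymm; SetRel.symm (R := W) hw1))

theorem stmt0 [UniformSpace X] (f : X → X) (hf : Continuous f)
    (h : HyperUCT f (hyClosed (X := X))) : UCT f := by
  intro x y E hE
  obtain ⟨D, hD, hDsymm, hDE⟩ := comp_symm_mem_uniformity_sets hE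
  have hDrefl : ∀ a : X, (a, a) ∈ D := fun a => refl_mem_uniformity hD
  -- continuity at x
  have hU : f ⁻¹' (UniformSpace.ball (f x) D) ∈ nhds x :=
    (hf.tendsto x) (UniformSpace.ball_mem_nhds (f x) hD)
  obtain ⟨m, hm, Z, hZ0, hZm, _, hZstep⟩ :=
    h (closure {x}) ⟨⟨x, subset_closure rfl⟩, isClosed_closure⟩
      (closure {y}) ⟨⟨y, subset_closure rfl⟩, isClosed_closure⟩ D hD
  obtain ⟨z, hzm, hzmem, hzstep⟩ := chainBack f D m Z hZstep y (by
    rw [hZm]; exact subset_closure rfl)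
  have hz0 : z 0 ∈ closure {x} := hZ0 ▸ hzmem 0 (Nat.zero_le m)
  have hfz0 : (f x, f (z 0)) ∈ D := closure_singleton_subset_nhds hU hz0
  refine ⟨m, hm, fun i => if i = 0 then x else z i, rfl, ?_, ?_⟩
  · have : m ≠ 0 := by omega
    simp [this, hzm]
  · intro i hi
    by_cases hc : i = 0
    · subst hc
      have h1 : (1 : ℕ) ≠ 0 := one_ne_zero
      simp only [if_pos rfl, h1, if_neg h1]
      exact hDE ⟨f (z 0), hfz0, hzstep 0 hi⟩
    · have h2 : i + 1 ≠ 0 := by omega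
      simp only [if_neg hc, if_neg h2]
      exact hDE ⟨f (z i), hDrefl _, hzstep i hi⟩
end

section
/- Let (X, 𝒰) be a uniform space and f : X → X continuous. If the induced map f_n on F_n(X) (nonempty subsets of X with at most n points) is uniform chain transitive for some n ≥ 1, then f is uniform chain transitive. -/
open Set

variable {X : Type*}

lemma extract_chain (f : X → X) (E : Set (X × X)) :
    ∀ m (Z : ℕ → Set X), (∀ i < m, Z (i + 1) ⊆ entImage E (f '' Z i)) →
    ∀ y ∈ Z m, ∃ z : ℕ → X, z m = y ∧ (∀ i ≤ m, z i ∈ Z i) ∧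
      ∀ i < m, (f (z i), z (i + 1)) ∈ E := by
  intro m
  induction m with
  | zero =>
    intro Z _ y hy
    exact ⟨fun _ => y, rfl, fun i hi => by interval_cases i; exact hy, fun i hi => by omega⟩
  | succ m ih =>
    intro Z hZ y hy
    obtain ⟨a, ⟨w, hw, rfl⟩, haE⟩ := hZ m (Nat.lt_succ_self m) hy
    obtain ⟨z, hzm, hzmem, hchain⟩ := ih Z (fun i hi => hZ i (by omega)) w hw
    refine ⟨fun i => if i = m + 1 then y else z i, by simp, ?_, ?_⟩
    · intro i hi
      by_cases hcase : i = m + 1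
      · simpa [hcase] using hy
      · simpa [hcase] using hzmem i (by omega)
    · intro i hi
      by_cases hcase : i = m
      · subst hcase
        simpa [hzm] using haE
      · have h1 : i ≠ m + 1 := by omega
        have h2 : i + 1 ≠ m + 1 := by omega
        simpa [h1, h2, hcase] using hchain i (by omega)

theorem stmt1 [UniformSpace X] (f : X → X) (hf : Continuous f)
    (n : ℕ) (hn : 1 ≤ n) (h : HyperUCT f (hyFn X n)) : UCT f := by
  intro x y E hE
  have hx : {x} ∈ hyFn X n := ⟨Set.singleton_nonempty x, Set.finite_singleton x, by simpa using hn⟩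
  have hy : {y} ∈ hyFn X n := ⟨Set.singleton_nonempty y, Set.finite_singleton y, by simpa using hn⟩
  obtain ⟨m, hm, Z, hZ0, hZm, _, hrel⟩ := h _ hx _ hy E hE
  obtain ⟨z, hzm, hzmem, hchain⟩ := extract_chain f E m Z (fun i hi => (hrel i hi).2)
    y (by rw [hZm]; exact rfl)
  have hz0 : z 0 = x := by
    have := hzmem 0 (Nat.zero_le m); rw [hZ0] at this; exact this
  exact ⟨m, hm, z, hz0, hzm, hchain⟩
end

section
/- Let X be a compact Hausdorff uniform space, f : X → X continuous, and Y ⊆ X a dense f-invariant subset. Then f is uniform chain transitive if and only if the restriction f|_Y is uniform chain transitive (with the subspace uniformity on Y). -/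
open Set

variable {X : Type*}

theorem stmt2 [UniformSpace X] [CompactSpace X] [T2Space X] (f : X → X)
    (hf : Continuous f) (Y : Set X) (hY : Dense Y) (hinv : Set.MapsTo f Y Y) :
    UCT f ↔ UCT (hinv.restrict) := by
  -- triple composition lemma
  have key : ∀ E ∈ uniformity X, ∃ C ∈ uniformity X, SetRel.IsSymm C ∧
      ∀ a b c d : X, (a, b) ∈ C → (b, c) ∈ C → (c, d) ∈ C → (a, d) ∈ E := by
    intro E hE
    obtain ⟨T, hT, hTs, hTE⟩ := comp_symm_mem_uniformity_sets hE
    obtain ⟨D, hD, hDs, hDT⟩ := comp_symm_mem_uniformity_sets hT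
    refine ⟨D, hD, hDs, fun a b c d hab hbc hcd => ?_⟩
    have h1 : (a, c) ∈ T := hDT (SetRel.prodMk_mem_comp hab hbc)
    have h2 : (c, d) ∈ T := hDT (SetRel.prodMk_mem_comp hcd (refl_mem_uniformity hD))
    exact hTE (SetRel.prodMk_mem_comp h1 h2)
  -- dense approximation
  have approx : ∀ (x : X), ∀ C ∈ uniformity X, ∃ w ∈ Y, (x, w) ∈ C := by
    intro x C hC
    have hx : x ∈ closure Y := hY x
    obtain ⟨w, hw1, hw2⟩ := mem_closure_iff_nhds.1 hx _ (UniformSpace.ball_mem_nhds x hC)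
    exact ⟨w, hw2, hw1⟩
  constructor
  · intro h a b E hE
    rw [uniformity_setCoe] at hE
    obtain ⟨E', hE', hsub⟩ := hE
    obtain ⟨C, hC, hCs, hCt⟩ := key E' hE'
    have huc := CompactSpace.uniformContinuous_of_continuous hf
    have hDc : {p : X × X | (f p.1, f p.2) ∈ C} ∈ uniformity X := huc hC
    have hC' : C ∩ {p : X × X | (f p.1, f p.2) ∈ C} ∈ uniformity X := Filter.inter_mem hC hDc
    obtain ⟨m, hm, z, hz0, hzm, hzc⟩ := h (a : X) (b : X) _ hC'
    have hwex : ∀ i : ℕ, ∃ w : Y, ((z i : X), (w : X)) ∈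
        C ∩ {p : X × X | (f p.1, f p.2) ∈ C} := by
      intro i
      obtain ⟨w, hwY, hw⟩ := approx (z i) _ hC'
      exact ⟨⟨w, hwY⟩, hw⟩
    choose w hw using hwex
    set W : ℕ → Y := fun i => if i = 0 then a else if m ≤ i then b else w i with hW
    have hWrel : ∀ i ≤ m, ((z i, (W i : X)) ∈ C ∩ {p : X × X | (f p.1, f p.2) ∈ C}) := by
      intro i him
      rcases Nat.eq_zero_or_pos i with hi0 | hipos
      · subst hi0
        simp only [hW, if_pos rfl, hz0]
        exact refl_mem_uniformity hC'
      · rcases eq_or_lt_of_le him with hieq | hilt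
        · subst hieq
          simp only [hW, Nat.pos_iff_ne_zero.1 hipos, if_neg (Nat.pos_iff_ne_zero.1 hipos),
            if_pos le_rfl, hzm]
          exact refl_mem_uniformity hC'
        · simp only [hW, if_neg (Nat.pos_iff_ne_zero.1 hipos), if_neg (not_le.2 hilt)]
          exact hw i
    refine ⟨m, hm, W, ?_, ?_, ?_⟩
    · simp [hW]
    · simp [hW, Nat.pos_iff_ne_zero.1 (lt_of_lt_of_le Nat.one_pos hm)]
    · intro i hi
      apply hsub
      have h1 : (f (W i : X), f (z i)) ∈ C := hCs.symm _ _ (hWrel i hi.le).2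
      have h2 : (f (z i), z (i + 1)) ∈ C := (hzc i hi).1
      have h3 : (z (i + 1), (W (i + 1) : X)) ∈ C := (hWrel (i + 1) hi).1
      exact hCt _ _ _ _ h1 h2 h3
  · intro h x y E hE
    obtain ⟨C, hC, hCs, hCt⟩ := key E hE
    have hCE : ∀ p q : X, (p, q) ∈ C → (p, q) ∈ E := fun p q hpq =>
      hCt p p q q (refl_mem_uniformity hC) hpq (refl_mem_uniformity hC)
    obtain ⟨a, haY, ha⟩ := approx (f x) C hC
    obtain ⟨b, hbY, hb⟩ := approx y C hC
    have hCmem : (Prod.map (Subtype.val : Y → X) Subtype.val) ⁻¹' C ∈ uniformity Y := by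
      rw [uniformity_setCoe]; exact Filter.preimage_mem_comap hC
    obtain ⟨k, hk, w, hw0, hwk, hwc⟩ := h ⟨a, haY⟩ ⟨b, hbY⟩ _ hCmem
    refine ⟨k + 1, by omega, fun i => if i = 0 then x else if i ≤ k then (w (i - 1) : X) else y,
      by simp, by simp [Nat.lt_irrefl], ?_⟩
    intro i hik
    rcases Nat.eq_zero_or_pos i with hi0 | hipos
    · subst hi0
      simp only [if_pos rfl, if_neg Nat.one_ne_zero]
      rw [if_pos (by omega : 1 ≤ k)]
      have : w (1 - 1) = w 0 := rfl
      rw [this, hw0]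
      exact hCE _ _ ha
    · have hine : i ≠ 0 := Nat.pos_iff_ne_zero.1 hipos
      rcases lt_or_eq_of_le (by omega : i ≤ k) with hiltk | hieqk
      · simp only [if_neg hine, if_pos (le_of_lt hiltk),
          if_neg (by omega : i + 1 ≠ 0), if_pos (by omega : i + 1 ≤ k)]
        have := hwc (i - 1) (by omega)
        have heq : i - 1 + 1 = i := by omega
        rw [heq] at this
        exact hCE _ _ this
      · subst hieqk
        simp only [if_neg hine, if_pos le_rfl, if_neg (by omega : ¬ i + 1 = 0),
          if_neg (by omega : ¬ i + 1 ≤ i)]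
        have h1 := hwc (i - 1) (by omega)
        have heq : i - 1 + 1 = i := by omega
        rw [heq, hwk] at h1
        exact hCt _ _ _ _ h1 (hCs.symm _ _ hb) (refl_mem_uniformity hC)
end

section
/- Let X be a compact Hausdorff uniform space and f : X → X continuous. If the induced map f_n on F_n(X) is uniform chain transitive for every n ≥ 1, then the induced map f^{<ω} on F(X), the collection of all finite nonempty subsets of X, is uniform chain transitive. -/
open Set

variable {X : Type*}

theorem stmt3 [UniformSpace X] [CompactSpace X] [T2Space X] (f : X → X)
    (hf : Continuous f) (h : ∀ n, 1 ≤ n → HyperUCT f (hyFn X n)) :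
    HyperUCT f (hyFin X) := by
  intro A hA B hB E hE
  set n := max (max A.ncard B.ncard) 1 with hn
  obtain ⟨m, hm1, Z, hZ0, hZm, hZS, hZc⟩ :=
    h n (le_max_right _ _) A ⟨hA.1, hA.2, le_trans (le_max_left _ _) (le_max_left _ _)⟩
      B ⟨hB.1, hB.2, le_trans (le_max_right _ _) (le_max_left _ _)⟩ E hE
  exact ⟨m, hm1, Z, hZ0, hZm, fun i hi => ⟨(hZS i hi).1, (hZS i hi).2.1⟩, hZc⟩
end

section
/- Let X be a compact Hausdorff uniform space and f : X → X continuous. If 2^f : 2^X → 2^X is uniform chain transitive, then f_2 : F_2(X) → F_2(X) is uniform chain transitive. -/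
open Set

variable {X : Type*}

lemma pair_mem_hyFn2 (a b : X) : ({a, b} : Set X) ∈ hyFn X 2 := by
  refine ⟨⟨a, by simp⟩, (Set.finite_singleton b).insert a, ?_⟩
  calc ({a, b} : Set X).ncard ≤ ({b} : Set X).ncard + 1 := Set.ncard_insert_le a {b}
    _ ≤ 2 := by simp

lemma exists_pair_eq {A : Set X} (hA : A ∈ hyFn X 2) : ∃ a b, A = {a, b} := by
  obtain ⟨hne, hfin, hcard⟩ := hA
  interval_cases hc : A.ncard
  · exact absurd ((Set.ncard_eq_zero hfin).mp hc) hne.ne_empty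
  · obtain ⟨a, rfl⟩ := Set.ncard_eq_one.mp hc
    exact ⟨a, a, by simp⟩
  · obtain ⟨a, b, -, rfl⟩ := Set.ncard_eq_two.mp hc
    exact ⟨a, b, rfl⟩

lemma backward_select (f : X → X) (E : Set (X × X)) :
    ∀ (m : ℕ) (Z : ℕ → Set X), (∀ i < m, Z (i + 1) ⊆ entImage E (f '' Z i)) →
    ∀ b ∈ Z m, ∃ z : ℕ → X, z m = b ∧ (∀ i ≤ m, z i ∈ Z i) ∧
      ∀ i < m, (f (z i), z (i + 1)) ∈ E := by
  intro m
  induction m with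
  | zero =>
    intro Z _ b hb
    exact ⟨fun _ => b, rfl, fun i hi => by simpa [Nat.le_zero.mp hi] using hb,
      fun i hi => by omega⟩
  | succ m ih =>
    intro Z hZ b hb
    obtain ⟨y, ⟨x, hx, rfl⟩, hyb⟩ := hZ m (by omega) hb
    obtain ⟨z, hzm, hmem, hstep⟩ := ih Z (fun i hi => hZ i (by omega)) x hx
    refine ⟨fun i => if i ≤ m then z i else b, by simp, ?_, ?_⟩
    · intro i hi
      by_cases h' : i ≤ m
      · simpa [h'] using hmem i h'
      · have : i = m + 1 := by omega
        simpa [h'] using this ▸ hb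
    · intro i hi
      by_cases h' : i < m
      · simpa [Nat.le_of_lt h', Nat.succ_le_of_lt h'] using hstep i h'
      · have : i = m := by omega
        subst this
        simpa [hzm] using hyb

lemma forward_select (f : X → X) (E : Set (X × X)) :
    ∀ (m : ℕ) (Z : ℕ → Set X), (∀ i < m, f '' Z i ⊆ entImage E (Z (i + 1))) →
    ∀ a ∈ Z 0, ∃ z : ℕ → X, z 0 = a ∧ (∀ i ≤ m, z i ∈ Z i) ∧
      ∀ i < m, (z (i + 1), f (z i)) ∈ E := by
  intro m
  induction m with
  | zero =>
    intro Z _ a ha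
    exact ⟨fun _ => a, rfl, fun i hi => by simpa [Nat.le_zero.mp hi] using ha,
      fun i hi => by omega⟩
  | succ m ih =>
    intro Z hZ a ha
    obtain ⟨z, hz0, hmem, hstep⟩ := ih Z (fun i hi => hZ i (by omega)) a ha
    obtain ⟨c, hc, hcf⟩ := hZ m (by omega) ⟨z m, hmem m le_rfl, rfl⟩
    refine ⟨fun i => if i ≤ m then z i else c, by simpa using hz0, ?_, ?_⟩
    · intro i hi
      by_cases h' : i ≤ m
      · simpa [h'] using hmem i h'
      · have : i = m + 1 := by omega
        simpa [h'] using this ▸ hc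
    · intro i hi
      by_cases h' : i < m
      · simpa [Nat.le_of_lt h', Nat.succ_le_of_lt h'] using hstep i h'
      · have : i = m := by omega
        subst this
        simpa using hcf

lemma pairHyperChain (f : X → X) {E : Set (X × X)} {m : ℕ} (z w : ℕ → X)
    (hz : ∀ i < m, (f (z i), z (i + 1)) ∈ E ∧ (z (i + 1), f (z i)) ∈ E)
    (hw : ∀ i < m, (f (w i), w (i + 1)) ∈ E ∧ (w (i + 1), f (w i)) ∈ E) :
    HyperChain f E (hyFn X 2) m {z 0, w 0} {z m, w m} := by
  refine ⟨fun i => {z i, w i}, rfl, rfl, fun i _ => pair_mem_hyFn2 _ _, fun i hi => ?_⟩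
  constructor
  · rintro y hy
    rw [Set.image_pair] at hy
    rcases hy with rfl | rfl
    · exact ⟨z (i + 1), Or.inl rfl, (hz i hi).2⟩
    · exact ⟨w (i + 1), Or.inr rfl, (hw i hi).2⟩
  · rintro y (rfl | rfl)
    · exact ⟨f (z i), Set.mem_image_of_mem f (Or.inl rfl), (hz i hi).1⟩
    · exact ⟨f (w i), Set.mem_image_of_mem f (Or.inr rfl), (hw i hi).1⟩

lemma HyperChain.trans {f : X → X} {E : Set (X × X)} {S : Set (Set X)} {m n : ℕ}
    {A B C : Set X} (h1 : HyperChain f E S m A B) (h2 : HyperChain f E S n B C) :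
    HyperChain f E S (m + n) A C := by
  obtain ⟨Z1, hZ10, hZ1m, hZ1S, hs1⟩ := h1
  obtain ⟨Z2, hZ20, hZ2n, hZ2S, hs2⟩ := h2
  refine ⟨fun i => if i ≤ m then Z1 i else Z2 (i - m), by simp [hZ10], ?_, ?_, ?_⟩
  · by_cases hn : n = 0
    · subst hn; simpa [hZ1m] using hZ20.symm.trans hZ2n
    · have h1' : ¬ (m + n ≤ m) := by omega
      simpa [h1', show m + n - m = n from by omega] using hZ2n
  · intro i hi
    by_cases h' : i ≤ m
    · simpa [h'] using hZ1S i h'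
    · simpa [h'] using hZ2S (i - m) (by omega)
  · intro i hi
    by_cases h' : i + 1 ≤ m
    · simpa [h', Nat.le_of_succ_le h'] using hs1 i (by omega)
    · by_cases h'' : i ≤ m
      · have : i = m := by omega
        subst this
        have h0 : 0 < n := by omega
        simpa [h'', h', hZ1m, hZ20] using hs2 0 h0
      · have e1 : i - m + 1 = i + 1 - m := by omega
        simpa [h', h'', e1] using hs2 (i - m) (by omega)

theorem stmt4 [UniformSpace X] [CompactSpace X] [T2Space X] (f : X → X)
    (hf : Continuous f) (h : HyperUCT f (hyClosed (X := X))) :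
    HyperUCT f (hyFn X 2) := by
  intro A hA B hB E hE
  obtain ⟨a1, a2, rfl⟩ := exists_pair_eq hA
  obtain ⟨b1, b2, rfl⟩ := exists_pair_eq hB
  set E' : Set (X × X) := SetRel.symmetrize E with hE'def
  have hE'mem : E' ∈ uniformity X := symmetrize_mem_uniformity hE
  have hE'sub : E' ⊆ E := SetRel.symmetrize_subset_self (R := E)
  have hE'symm : ∀ a b : X, (a, b) ∈ E' → (b, a) ∈ E' := fun a b hab =>
    ⟨hab.2, hab.1⟩
  have hAc : ({a1, a2} : Set X) ∈ hyClosed :=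
    ⟨⟨a1, by simp⟩, ((Set.finite_singleton a2).insert a1).isClosed⟩
  have hBc : ({b1, b2} : Set X) ∈ hyClosed :=
    ⟨⟨b1, by simp⟩, ((Set.finite_singleton b2).insert b1).isClosed⟩
  obtain ⟨m, hm1, Z, hZ0, hZm, hZS, hZstep⟩ := h _ hAc _ hBc E' hE'mem
  have hback : ∀ i < m, Z (i + 1) ⊆ entImage E' (f '' Z i) := fun i hi => (hZstep i hi).2
  obtain ⟨u, hum, humem, hustep⟩ := backward_select f E' m Z hback b1
    (by rw [hZm]; exact Or.inl rfl)
  obtain ⟨v, hvm, hvmem, hvstep⟩ := backward_select f E' m Z hback b2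
    (by rw [hZm]; exact Or.inr rfl)
  have hu0 : u 0 ∈ ({a1, a2} : Set X) := by rw [← hZ0]; exact humem 0 (Nat.zero_le m)
  have hv0 : v 0 ∈ ({a1, a2} : Set X) := by rw [← hZ0]; exact hvmem 0 (Nat.zero_le m)
  have hu' : ∀ i < m, (f (u i), u (i + 1)) ∈ E ∧ (u (i + 1), f (u i)) ∈ E := fun i hi =>
    ⟨hE'sub (hustep i hi), hE'sub (hE'symm _ _ (hustep i hi))⟩
  have hv' : ∀ i < m, (f (v i), v (i + 1)) ∈ E ∧ (v (i + 1), f (v i)) ∈ E := fun i hi =>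
    ⟨hE'sub (hvstep i hi), hE'sub (hE'symm _ _ (hvstep i hi))⟩
  have chain2 : HyperChain f E (hyFn X 2) m {u 0, v 0} {b1, b2} := by
    have := pairHyperChain f u v hu' hv'
    rwa [hum, hvm] at this
  by_cases hS : ({u 0, v 0} : Set X) = {a1, a2}
  · exact ⟨m, hm1, hS ▸ chain2⟩
  · have huv : u 0 = v 0 := by
      have hu0' : u 0 = a1 ∨ u 0 = a2 := by simpa using hu0
      have hv0' : v 0 = a1 ∨ v 0 = a2 := by simpa using hv0
      rcases hu0' with h1 | h1 <;> rcases hv0' with h2 | h2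
      · rw [h1, h2]
      · exact absurd (by rw [h1, h2]) hS
      · exact absurd (by rw [h1, h2]; exact Set.pair_comm _ _) hS
      · rw [h1, h2]
    have hcS : ({u 0} : Set X) ∈ hyClosed := ⟨⟨u 0, rfl⟩, isClosed_singleton⟩
    obtain ⟨n, hn1, Y, hY0, hYn, hYS, hYstep⟩ := h _ hAc _ hcS E' hE'mem
    have hfwd : ∀ i < n, f '' Y i ⊆ entImage E' (Y (i + 1)) := fun i hi => (hYstep i hi).1
    obtain ⟨p, hp0, hpmem, hpstep⟩ := forward_select f E' n Y hfwd a1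
      (by rw [hY0]; exact Or.inl rfl)
    obtain ⟨q, hq0, hqmem, hqstep⟩ := forward_select f E' n Y hfwd a2
      (by rw [hY0]; exact Or.inr rfl)
    have hpn : p n = u 0 := by have := hpmem n le_rfl; rwa [hYn] at this
    have hqn : q n = u 0 := by have := hqmem n le_rfl; rwa [hYn] at this
    have hp' : ∀ i < n, (f (p i), p (i + 1)) ∈ E ∧ (p (i + 1), f (p i)) ∈ E := fun i hi =>
      ⟨hE'sub (hE'symm _ _ (hpstep i hi)), hE'sub (hpstep i hi)⟩
    have hq' : ∀ i < n, (f (q i), q (i + 1)) ∈ E ∧ (q (i + 1), f (q i)) ∈ E := fun i hi =>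
      ⟨hE'sub (hE'symm _ _ (hqstep i hi)), hE'sub (hqstep i hi)⟩
    have chain1 : HyperChain f E (hyFn X 2) n {a1, a2} {u 0, v 0} := by
      have := pairHyperChain f p q hp' hq'
      rwa [hp0, hq0, hpn, hqn, show ({u 0, u 0} : Set X) = {u 0, v 0} by rw [← huv]] at this
    exact ⟨n + m, by omega, chain1.trans chain2⟩
end

section
/- Let X be a compact Hausdorff uniform space and f : X → X continuous. If f_n : F_n(X) → F_n(X) is uniform chain transitive for every n ≥ 1, then 2^f : 2^X → 2^X is uniform chain transitive. -/
open Set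

variable {X : Type*}

lemma hyperRel_mono {D E : Set (X × X)} {P Q : Set X} (hDE : D ⊆ E)
    (h : hyperRel D P Q) : hyperRel E P Q := by
  refine ⟨fun p hp => ?_, fun q hq => ?_⟩
  · obtain ⟨q, hq, hpq⟩ := h.1 hp; exact ⟨q, hq, hDE hpq⟩
  · obtain ⟨p, hp, hpq⟩ := h.2 hq; exact ⟨p, hp, hDE hpq⟩

lemma hyperRel_comp {D1 D2 E : Set (X × X)} {P Q R : Set X}
    (h1 : hyperRel D1 P Q) (h2 : hyperRel D2 Q R)
    (h12 : SetRel.comp D1 D2 ⊆ E) (h21 : SetRel.comp D2 D1 ⊆ E) :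
    hyperRel E P R := by
  constructor
  · intro p hp
    obtain ⟨q, hq, hqp⟩ := h1.1 hp
    obtain ⟨r, hr, hrq⟩ := h2.1 hq
    exact ⟨r, hr, h21 ⟨q, hrq, hqp⟩⟩
  · intro r hr
    obtain ⟨q, hq, hqr⟩ := h2.2 hr
    obtain ⟨p, hp, hpq⟩ := h1.2 hq
    exact ⟨p, hp, h12 ⟨q, hpq, hqr⟩⟩

/-- In a compact space, every nonempty set admits a finite nonempty subset `K`
with `A ⊆ D[K]`, for any symmetric-enough entourage. -/
lemma exists_finite_net [UniformSpace X] [CompactSpace X] {A : Set X}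
    (hA : A.Nonempty) {D : Set (X × X)} (hD : D ∈ uniformity X)
    (hDsymm : SetRel.IsSymm D) :
    ∃ K, K ⊆ A ∧ K.Finite ∧ K.Nonempty ∧ A ⊆ entImage D K := by
  have htb : TotallyBounded A :=
    (isCompact_univ.totallyBounded).subset (subset_univ A)
  obtain ⟨K, hKA, hKfin, hcov⟩ := totallyBounded_iff_subset.mp htb D hD
  have hsub : A ⊆ entImage D K := by
    intro x hx
    obtain ⟨s, ⟨k, rfl⟩, hs⟩ := hcov hx
    simp only [Set.mem_iUnion] at hs
    obtain ⟨hk, hxk⟩ := hs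
    exact ⟨k, hk, (haveI := hDsymm; (SetRel.comm (R := D)).mp hxk)⟩
  obtain ⟨a, ha⟩ := hA
  obtain ⟨k, hk, -⟩ := hsub ha
  exact ⟨K, hKA, hKfin, ⟨k, hk⟩, hsub⟩

theorem stmt5 [UniformSpace X] [CompactSpace X] [T2Space X] (f : X → X)
    (hf : Continuous f) (h : ∀ n, 1 ≤ n → HyperUCT f (hyFn X n)) :
    HyperUCT f (hyClosed (X := X)) := by
  intro A hA B hB E hE
  -- choose D with D ∘ D ∘ D ⊆ E
  obtain ⟨D1, hD1, hD1E⟩ := comp_mem_uniformity_sets hE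
  obtain ⟨D, hD, hDD1⟩ := comp_mem_uniformity_sets hD1
  have hDrefl : SetRel.id ⊆ D := refl_le_uniformity hD
  have hDsub : D ⊆ SetRel.comp D D := by
    have := isRefl_of_mem_uniformity hD; exact SetRel.left_subset_comp
  have hDD1' : D ⊆ D1 := hDsub.trans hDD1
  have hDE3 : SetRel.comp D (SetRel.comp D D) ⊆ E :=
    (SetRel.comp_subset_comp hDD1' hDD1).trans hD1E
  have hDE2 : SetRel.comp D D ⊆ E :=
    (SetRel.comp_subset_comp (le_refl D) hDsub).trans hDE3
  have hDE : D ⊆ E := hDsub.trans hDE2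
  -- uniform continuity of f
  have huc : UniformContinuous f := CompactSpace.uniformContinuous_of_continuous hf
  have hDf : {x : X × X | (f x.1, f x.2) ∈ D} ∈ uniformity X :=
    uniformContinuous_def.mp huc D hD
  set Dm := SetRel.symmetrize (D ∩ {x : X × X | (f x.1, f x.2) ∈ D}) with hDm
  have hDmmem : Dm ∈ uniformity X :=
    symmetrize_mem_uniformity (Filter.inter_mem hD hDf)
  have hDmsymm : SetRel.IsSymm Dm := SetRel.isSymm_symmetrize
  have hDmD : Dm ⊆ D := SetRel.symmetrize_subset_self.trans inter_subset_left
  have hDmf : ∀ p : X × X, p ∈ Dm → (f p.1, f p.2) ∈ D := fun p hp =>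
    (SetRel.symmetrize_subset_self hp).2
  -- finite nets for A and B
  obtain ⟨K, hKA, hKfin, hKne, hAK⟩ := exists_finite_net hA.1 hDmmem hDmsymm
  obtain ⟨L, hLB, hLfin, hLne, hBL⟩ := exists_finite_net hB.1 hDmmem hDmsymm
  set n := max K.ncard L.ncard with hn
  have hn1 : 1 ≤ n := le_trans ((Set.ncard_pos hKfin).mpr hKne) (le_max_left _ _)
  have hKmem : K ∈ hyFn X n := ⟨hKne, hKfin, le_max_left _ _⟩
  have hLmem : L ∈ hyFn X n := ⟨hLne, hLfin, le_max_right _ _⟩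
  obtain ⟨m, hm1, Z, hZ0, hZm, hZmem, hZstep⟩ := h n hn1 K hKmem L hLmem Dm hDmmem
  have hm0 : m ≠ 0 := by omega
  -- the new chain
  refine ⟨m, hm1, fun i => if i = 0 then A else if i = m then B else Z i, ?_, ?_, ?_, ?_⟩
  · simp
  · simp [hm0]
  · intro i hi
    by_cases h0 : i = 0
    · simpa [h0] using hA
    by_cases hM : i = m
    · simpa [hM, hm0] using hB
    · simp only [h0, hM, if_false]
      obtain ⟨hne, hfin, -⟩ := hZmem i hi
      exact ⟨hne, hfin.isClosed⟩
  · intro i hi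
    -- basic hyperRel facts
    have hAfK : hyperRel D (f '' A) (f '' K) := by
      constructor
      · rintro y ⟨a, ha, rfl⟩
        obtain ⟨k, hk, hka⟩ := hAK ha
        exact ⟨f k, ⟨k, hk, rfl⟩, hDmf _ hka⟩
      · rintro y ⟨k, hk, rfl⟩
        exact ⟨f k, ⟨k, hKA hk, rfl⟩, refl_mem_uniformity hD⟩
    have hLB' : hyperRel D L B := by
      constructor
      · intro x hx
        exact ⟨x, hLB hx, refl_mem_uniformity hD⟩
      · intro x hx
        obtain ⟨l, hl, hlx⟩ := hBL hx
        exact ⟨l, hl, hDmD hlx⟩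
    have hstep : ∀ j < m, hyperRel D (f '' Z j) (Z (j + 1)) :=
      fun j hj => hyperRel_mono hDmD (hZstep j hj)
    have hassoc : SetRel.comp (SetRel.comp D D) D ⊆ E := by
      rw [SetRel.comp_assoc]; exact hDE3
    by_cases h0 : i = 0
    · subst h0
      have h2 : hyperRel D (f '' K) (Z 1) := by rw [← hZ0]; exact hstep 0 hi
      have h12 : hyperRel (SetRel.comp D D) (f '' A) (Z 1) :=
        hyperRel_comp hAfK h2 (le_refl _) (le_refl _)
      by_cases hM : m = 1
      · have hZ1 : Z 1 = L := by rw [← hM]; exact hZm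
        rw [hZ1] at h12
        have := hyperRel_comp h12 hLB' hassoc hDE3
        simpa [hM] using this
      · have : (1 : ℕ) ≠ m := fun hh => hM hh.symm
        simpa [this] using hyperRel_mono hDE2 h12
    · by_cases hM : i + 1 = m
      · have h2 : hyperRel D (f '' Z i) L := by rw [← hZm, ← hM]; exact hstep i hi
        have := hyperRel_comp h2 hLB' hDE2 hDE2
        simpa [h0, hM, hm0, Nat.lt_irrefl, ne_of_lt hi] using this
      · have := hyperRel_mono hDE (hstep i hi)
        simpa [h0, hM, ne_of_lt hi] using this
end

section
/- Let X be a compact Hausdorff uniform space and f : X → X continuous. If f_n : F_n(X) → F_n(X) is uniform chain transitive for some n ≥ 2, then f_m is uniform chain transitive for every m ≥ 1. In particular it suffices to show that uniform chain transitivity of f_n implies that of f_{n+1}. -/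
open Set

variable {X : Type*}

/-! Auxiliary lemmas -/

lemma chain_trans {f : X → X} {E : Set (X × X)} {k l : ℕ} {x y z : X}
    (h1 : HasChain f E k x y) (h2 : HasChain f E l y z) : HasChain f E (k + l) x z := by
  obtain ⟨u, hu0, huk, hus⟩ := h1
  obtain ⟨v, hv0, hvl, hvs⟩ := h2
  refine ⟨fun i => if i < k then u i else v (i - k), ?_, ?_, ?_⟩
  · by_cases hk : 0 < k
    · simp [hk, hu0]
    · have : k = 0 := by omega
      subst this
      simpa [hv0] using huk.symm.trans hu0
  · have : ¬ (k + l < k) := by omega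
    simp [this, hvl]
  · intro i hi
    by_cases h1' : i + 1 < k
    · have : i < k := by omega
      simp only [this, h1', if_pos]
      exact hus i this
    · by_cases h2' : i < k
      · have hik : i + 1 = k := by omega
        show (f (if i < k then u i else v (i - k)),
          if i + 1 < k then u (i + 1) else v (i + 1 - k)) ∈ E
        rw [if_pos h2', if_neg h1']
        have : v ((i+1) - k) = u (i + 1) := by rw [hik]; simp [hv0, huk]
        rw [this]
        exact hus i h2'
      · have h3 : ¬ (i + 1 < k) := by omega
        have h4 : i + 1 - k = (i - k) + 1 := by omega
        show (f (if i < k then u i else v (i - k)),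
          if i + 1 < k then u (i + 1) else v (i + 1 - k)) ∈ E
        rw [if_neg h2', if_neg h3, h4]
        exact hvs (i - k) (by omega)
lemma chain_single {f : X → X} {E : Set (X × X)} {x y : X} (h : (f x, y) ∈ E) :
    HasChain f E 1 x y := by
  refine ⟨fun i => if i = 0 then x else y, by simp, by simp, ?_⟩
  intro i hi
  have : i = 0 := by omega
  subst this; simpa using h

lemma chain_zero {f : X → X} {E : Set (X × X)} (x : X) : HasChain f E 0 x x :=
  ⟨fun _ => x, rfl, rfl, by omega⟩

lemma chain_loop_mul {f : X → X} {E : Set (X × X)} {x : X} {p : ℕ}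
    (hp : HasChain f E p x x) : ∀ α : ℕ, HasChain f E (α * p) x x := by
  intro α
  induction α with
  | zero => simpa using chain_zero x
  | succ a ih => have := chain_trans ih hp; simpa [Nat.succ_mul] using this

lemma hyper_extract {f : X → X} {E : Set (X × X)} {S : Set (Set X)} :
    ∀ {k : ℕ} {A B : Set X}, HyperChain f E S k A B → ∀ b ∈ B, ∃ a ∈ A, HasChain f E k a b := by
  intro k
  induction k with
  | zero =>
    intro A B hC b hb
    obtain ⟨Z, hZ0, hZk, _, _⟩ := hC
    refine ⟨b, ?_, chain_zero b⟩
    rw [← hZ0, hZk]; exact hb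
  | succ k ih =>
    intro A B hC b hb
    obtain ⟨Z, hZ0, hZk, hmem, hstep⟩ := hC
    have htrunc : HyperChain f E S k A (Z k) :=
      ⟨Z, hZ0, rfl, fun i hi => hmem i (by omega), fun i hi => hstep i (by omega)⟩
    have hb' : b ∈ Z (k + 1) := by rw [hZk]; exact hb
    obtain ⟨w, hw, hwb⟩ := (hstep k (by omega)).2 hb'
    obtain ⟨u, hu, huw⟩ := hw
    obtain ⟨a, ha, hchain⟩ := ih htrunc u hu
    refine ⟨a, ha, ?_⟩
    have := chain_trans hchain (chain_single (by rw [huw]; exact hwb))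
    simpa using this

section Main

variable [UniformSpace X]

lemma singleton_mem_hyFn {n : ℕ} (hn : 1 ≤ n) (x : X) : {x} ∈ hyFn X n :=
  ⟨singleton_nonempty x, finite_singleton x, by simp [hn]⟩

lemma pair_mem_hyFn {n : ℕ} (hn : 2 ≤ n) (x y : X) : ({x, y} : Set X) ∈ hyFn X n := by
  refine ⟨⟨x, by simp⟩, (finite_singleton y).insert x, ?_⟩
  calc ({x, y} : Set X).ncard ≤ ({y} : Set X).ncard + 1 := Set.ncard_insert_le x {y}
    _ ≤ n := by simp; omega

/-- Existence of chains between any two points. -/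
lemma exists_chain {f : X → X} {n : ℕ} (hn : 2 ≤ n) (h : HyperUCT f (hyFn X n))
    (x y : X) {E : Set (X × X)} (hE : E ∈ uniformity X) :
    ∃ k, 1 ≤ k ∧ HasChain f E k x y := by
  obtain ⟨m, hm, hC⟩ := h {x} (singleton_mem_hyFn (by omega) x)
    {y} (singleton_mem_hyFn (by omega) y) E hE
  obtain ⟨a, ha, hchain⟩ := hyper_extract hC y (by simp)
  rw [mem_singleton_iff] at ha
  exact ⟨m, hm, ha ▸ hchain⟩

/-- A common-length loop and chain from hyperchains `{x} → {x, y}`. -/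
lemma exists_loop_and_chain {f : X → X} {n : ℕ} (hn : 2 ≤ n) (h : HyperUCT f (hyFn X n))
    (x y : X) {E : Set (X × X)} (hE : E ∈ uniformity X) :
    ∃ k, 1 ≤ k ∧ HasChain f E k x x ∧ HasChain f E k x y := by
  obtain ⟨m, hm, hC⟩ := h {x} (singleton_mem_hyFn (by omega) x)
    {x, y} (pair_mem_hyFn hn x y) E hE
  obtain ⟨a, ha, hchain1⟩ := hyper_extract hC x (by simp)
  obtain ⟨a', ha', hchain2⟩ := hyper_extract hC y (by simp)
  rw [mem_singleton_iff] at ha ha'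
  exact ⟨m, hm, ha ▸ hchain1, ha' ▸ hchain2⟩

/-- Uniform chain mixing: eventually chains of every sufficiently large length exist. -/
lemma chain_mixing {f : X → X} {n : ℕ} (hn : 2 ≤ n) (h : HyperUCT f (hyFn X n))
    (x y : X) {E : Set (X × X)} (hE : E ∈ uniformity X) :
    ∃ N, ∀ K ≥ N, HasChain f E K x y := by
  -- a 1-chain from x to f x
  have h1 : HasChain f E 1 x (f x) := chain_single (refl_mem_uniformity hE)
  -- loop and chain of common length k at f x back to x
  obtain ⟨k, hk, hloop, hback⟩ := exists_loop_and_chain hn h (f x) x hE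
  -- loops at x of lengths k+1 and 2k+1
  have hp : HasChain f E (k + 1) x x := by
    have := chain_trans h1 hback; simpa [Nat.add_comm] using this
  have hq : HasChain f E (2 * k + 1) x x := by
    have := chain_trans h1 (chain_trans hloop hback)
    have h2 : 1 + (k + k) = 2 * k + 1 := by ring
    simpa [h2] using this
  -- a chain from x to y
  obtain ⟨d, hd, hxy⟩ := exists_chain hn h x y hE
  set p := k + 1 with hpdef
  set q := 2 * k + 1 with hqdef
  have hcop : Nat.Coprime p q := by
    have hq' : q = k + p := by omega
    rw [hq', Nat.coprime_add_self_right, show p = 1 + k by omega,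
      Nat.coprime_add_self_left]
    exact Nat.coprime_one_left k
  have hfrob := frobeniusNumber_pair hcop (by omega) (by omega)
  have hge : p + q ≤ p * q := Nat.add_le_mul (by omega) (by omega)
  refine ⟨p * q + d, fun K hK => ?_⟩
  -- K - d > p*q - p - q, so K - d is in the submonoid generated by p, q
  have hKd : K - d ∈ AddSubmonoid.closure ({p, q} : Set ℕ) := by
    by_contra hc
    have := hfrob.2 hc
    omega
  rw [AddSubmonoid.mem_closure_pair] at hKd
  obtain ⟨α, β, hαβ⟩ := hKd
  simp only [smul_eq_mul] at hαβ
  have hloopK : HasChain f E (K - d) x x := by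
    have := chain_trans (chain_loop_mul hp α) (chain_loop_mul hq β)
    rw [hαβ] at this; exact this
  have := chain_trans hloopK hxy
  have hKval : K - d + d = K := by omega
  rwa [hKval] at this

/-- Every set in `hyFn X m` is the range of a function from `Fin m`. -/
lemma exists_range_eq {m : ℕ} (hm : 1 ≤ m) {A : Set X} (hA : A ∈ hyFn X m) :
    ∃ g : Fin m → X, Set.range g = A := by
  obtain ⟨hne, hfin, hcard⟩ := hA
  obtain ⟨N, e, he⟩ := hfin.fin_embedding
  have hN : N = A.ncard := by
    rw [← he, ← Set.image_univ, Set.ncard_image_of_injective _ e.injective,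
      Set.ncard_univ]
    simp
  have hNm : N ≤ m := by omega
  have hN1 : 1 ≤ N := by
    rcases hne with ⟨a, ha⟩
    rw [← he] at ha
    obtain ⟨i, -⟩ := ha
    exact i.pos
  refine ⟨fun i => if h : (i : ℕ) < N then e ⟨i, h⟩ else e ⟨0, by omega⟩, ?_⟩
  rw [← he]
  apply Set.eq_of_subset_of_subset
  · rintro _ ⟨i, rfl⟩
    by_cases h : (i : ℕ) < N
    · simp only [dif_pos h]; exact ⟨_, rfl⟩
    · simp only [dif_neg h]; exact ⟨_, rfl⟩
  · rintro _ ⟨⟨j, hj⟩, rfl⟩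
    refine ⟨⟨j, by omega⟩, ?_⟩
    simp only [dif_pos (show ((⟨j, by omega⟩ : Fin m) : ℕ) < N from hj)]

end Main

theorem stmt6 [UniformSpace X] [CompactSpace X] [T2Space X] (f : X → X)
    (hf : Continuous f) (n : ℕ) (hn : 2 ≤ n) (h : HyperUCT f (hyFn X n)) :
    ∀ m, 1 ≤ m → HyperUCT f (hyFn X m) := by
  intro m hm A hA B hB E hE
  -- symmetric entourage
  set E' := SetRel.symmetrize E with hE'def
  have hE' : E' ∈ uniformity X := symmetrize_mem_uniformity hE
  have hE'E : E' ⊆ E := SetRel.symmetrize_subset_self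
  have hE'symm : ∀ {a b : X}, (a, b) ∈ E' → (b, a) ∈ E' := fun hab => ⟨hab.2, hab.1⟩
  obtain ⟨a, ha⟩ := exists_range_eq hm hA
  obtain ⟨b, hb⟩ := exists_range_eq hm hB
  -- For each index pick a threshold
  have hmix : ∀ j : Fin m, ∃ N, ∀ K ≥ N, HasChain f E' K (a j) (b j) :=
    fun j => chain_mixing hn h (a j) (b j) hE'
  choose N hN using hmix
  set K := (Finset.univ.sup N) + 1 with hKdef
  have hK1 : 1 ≤ K := by omega
  have hchains : ∀ j : Fin m, HasChain f E' K (a j) (b j) := by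
    intro j
    exact hN j K (by
      have := Finset.le_sup (f := N) (Finset.mem_univ j)
      omega)
  choose z hz0 hzK hzs using hchains
  refine ⟨K, hK1, fun i => Set.range (fun j => z j i), ?_, ?_, ?_, ?_⟩
  · show Set.range (fun j => z j 0) = A
    rw [show (fun j => z j 0) = a from funext hz0, ha]
  · show Set.range (fun j => z j K) = B
    rw [show (fun j => z j K) = b from funext hzK, hb]
  · intro i _
    have : Nonempty (Fin m) := ⟨⟨0, by omega⟩⟩
    refine ⟨Set.range_nonempty _, Set.finite_range _, ?_⟩
    calc (Set.range fun j => z j i).ncard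
        = ((fun j => z j i) '' Set.univ).ncard := by rw [Set.image_univ]
      _ ≤ (Set.univ : Set (Fin m)).ncard := Set.ncard_image_le Set.finite_univ
      _ = m := by rw [Set.ncard_univ]; simp
  · intro i hi
    constructor
    · rintro _ ⟨w, ⟨j, rfl⟩, rfl⟩
      exact ⟨z j (i + 1), ⟨j, rfl⟩, hE'E (hE'symm (hzs j i hi))⟩
    · rintro _ ⟨j, rfl⟩
      exact ⟨f (z j i), ⟨z j i, ⟨j, rfl⟩, rfl⟩, hE'E (hzs j i hi)⟩
end

section
/- Let X be a compact Hausdorff uniform space and f : X → X continuous. If f_2 : F_2(X) → F_2(X) is uniform chain transitive, then f is uniform chain transitive, and for every z ∈ X and every entourage E there exist two E-chains from z to itself whose lengths are coprime (in fact of consecutive lengths r and r+1). -/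
open Set

variable {X : Type*}

lemma hasChain_mono {f : X → X} {D E : Set (X × X)} (hDE : D ⊆ E) {m x y}
    (h : HasChain f D m x y) : HasChain f E m x y := by
  obtain ⟨z, h0, hm, hc⟩ := h
  exact ⟨z, h0, hm, fun i hi => hDE (hc i hi)⟩

/-- Forward extraction of a point chain from a hyperchain, using a symmetric entourage. -/
lemma extract_chain_s7 {f : X → X} {D : Set (X × X)} (hD : SetRel.IsSymm D)
    {S : Set (Set X)} {m : ℕ} {A B : Set X} (hc : HyperChain f D S m A B)
    {x : X} (hx : x ∈ A) : ∃ w ∈ B, HasChain f D m x w := by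
  obtain ⟨Z, hZ0, hZm, _, hstep⟩ := hc
  have key : ∀ i ≤ m, ∃ w ∈ Z i, HasChain f D i x w := by
    intro i
    induction i with
    | zero => intro _; exact ⟨x, hZ0 ▸ hx, fun _ => x, rfl, rfl, fun j hj => absurd hj (Nat.not_lt_zero j)⟩
    | succ i ih =>
      intro him
      obtain ⟨w, hw, z, hz0, hzi, hzc⟩ := ih (Nat.le_of_succ_le him)
      have hfw : f w ∈ entImage D (Z (i + 1)) :=
        (hstep i (Nat.lt_of_succ_le him)).1 ⟨w, hw, rfl⟩
      obtain ⟨c, hc, hcfw⟩ := hfw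
      refine ⟨c, hc, fun j => if j = i + 1 then c else z j, ?_, ?_, ?_⟩
      · simp [hz0]
      · simp
      · intro j hj
        rcases Nat.lt_succ_iff_lt_or_eq.mp hj with hj' | hj'
        · have h1 : j ≠ i + 1 := by omega
          have h2 : j + 1 ≠ i + 1 := by omega
          simp only [h1, h2, if_false]
          exact hzc j hj'
        · subst hj'
          have h1 : j ≠ j + 1 := by omega
          simp only [h1, if_false, if_pos rfl, hzi]
          haveI := hD; exact SetRel.symm D hcfw
  exact hZm ▸ key m le_rfl

theorem stmt7 [UniformSpace X] [CompactSpace X] [T2Space X] (f : X → X)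
    (hf : Continuous f) (h : HyperUCT f (hyFn X 2)) :
    UCT f ∧ ∀ z : X, ∀ E ∈ uniformity X, ∃ r, 1 ≤ r ∧
      HasChain f E r z z ∧ HasChain f E (r + 1) z z := by
  have hsing : ∀ x : X, {x} ∈ hyFn X 2 := fun x =>
    ⟨singleton_nonempty x, finite_singleton x, by simp [Set.ncard_singleton]⟩
  constructor
  · intro x y E hE
    obtain ⟨m, hm, hchain⟩ := h {x} (hsing x) {y} (hsing y) (SetRel.symmetrize E)
      (symmetrize_mem_uniformity hE)
    obtain ⟨w, hw, hch⟩ := extract_chain_s7 (SetRel.isSymm_symmetrize (R := E)) hchain (mem_singleton x)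
    rw [mem_singleton_iff] at hw
    exact ⟨m, hm, hasChain_mono (SetRel.symmetrize_subset_self (R := E)) (hw ▸ hch)⟩
  · intro z E hE
    have hpair : ({z, f z} : Set X) ∈ hyFn X 2 := by
      refine ⟨⟨z, by simp⟩, (finite_singleton (f z)).insert z, ?_⟩
      calc ({z, f z} : Set X).ncard ≤ ({f z} : Set X).ncard + 1 :=
            Set.ncard_insert_le z {f z}
        _ ≤ 2 := by simp [Set.ncard_singleton]
    obtain ⟨r, hr, hchain⟩ := h {z, f z} hpair {z} (hsing z) (SetRel.symmetrize E)
      (symmetrize_mem_uniformity hE)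
    have hDsub := SetRel.symmetrize_subset_self (R := E)
    have hDsym := SetRel.isSymm_symmetrize (R := E)
    refine ⟨r, hr, ?_, ?_⟩
    · obtain ⟨w, hw, hch⟩ := extract_chain_s7 hDsym hchain (show z ∈ ({z, f z} : Set X) by simp)
      rw [mem_singleton_iff] at hw
      exact hasChain_mono hDsub (hw ▸ hch)
    · obtain ⟨w, hw, c, hc0, hcr, hcc⟩ :=
        extract_chain_s7 hDsym hchain (show f z ∈ ({z, f z} : Set X) by simp)
      rw [mem_singleton_iff] at hw
      refine hasChain_mono hDsub ⟨fun j => if j = 0 then z else c (j - 1), rfl, ?_, ?_⟩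
      · simp [hcr, hw]
      · intro i hi
        rcases Nat.eq_zero_or_pos i with h0 | h0
        · subst h0
          simp only [if_pos rfl, if_neg (Nat.one_ne_zero), Nat.sub_self, hc0]
          exact refl_mem_uniformity (symmetrize_mem_uniformity hE)
        · have h1 : i ≠ 0 := by omega
          have h2 : i + 1 ≠ 0 := by omega
          simp only [h1, h2, if_false]
          have key := hcc (i - 1) (by omega)
          rw [show i - 1 + 1 = i by omega] at key
          rw [Nat.add_sub_cancel]; exact key
end

section
/- Let X be a compact Hausdorff uniform space, f : X → X continuous, and n ≥ 1. Then the product map f^{(n)} : X^n → X^n, (x₁, ..., x_n) ↦ (f(x₁), ..., f(x_n)), is uniform chain transitive if and only if the induced map f_n : F_n(X) → F_n(X) is uniform chain transitive. -/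
open Set

variable {X : Type*}

-- concatenation of chains
lemma hasChain_trans {f : X → X} {E : Set (X × X)} {p q : ℕ} {a b c : X}
    (h1 : HasChain f E p a b) (h2 : HasChain f E q b c) : HasChain f E (p + q) a c := by
  obtain ⟨z1, hz10, hz1p, hc1⟩ := h1
  obtain ⟨z2, hz20, hz2q, hc2⟩ := h2
  refine ⟨fun i => if i ≤ p then z1 i else z2 (i - p), by simp [hz10], ?_, ?_⟩
  · rcases Nat.eq_zero_or_pos q with hq | hq
    · subst hq
      have hbc : b = c := by rw [← hz20, hz2q]
      simp [hz1p, hbc]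
    · have hnp : ¬ (p + q ≤ p) := by omega
      have : p + q - p = q := by omega
      simp [hnp, this, hz2q]
  · intro i hi
    rcases Nat.lt_or_ge i p with h | h
    · have h1' : i ≤ p := by omega
      have h2' : i + 1 ≤ p := by omega
      simp only [h1', h2', if_pos]
      exact hc1 i h
    · by_cases he : i = p
      · have hq : 0 < q := by omega
        have h1' : i ≤ p := le_of_eq he
        have h2' : ¬ (i + 1 ≤ p) := by omega
        have e1 : i + 1 - p = 1 := by omega
        simp only [h1', if_pos, h2', if_neg, not_false_iff, e1]
        rw [he, hz1p, ← hz20]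
        exact hc2 0 hq
      · have h1' : ¬ (i ≤ p) := by omega
        have h2' : ¬ (i + 1 ≤ p) := by omega
        simp only [h1', h2', if_neg, not_false_iff]
        have := hc2 (i - p) (by omega)
        have e : i - p + 1 = i + 1 - p := by omega
        rwa [e] at this

lemma hasChain_mul {f : X → X} {E : Set (X × X)} {s : ℕ} {a : X}
    (h : HasChain f E s a a) : ∀ k, 1 ≤ k → HasChain f E (k * s) a a := by
  intro k hk
  induction k with
  | zero => omega
  | succ k ih =>
    rcases Nat.eq_zero_or_pos k with h0 | h0
    · subst h0; simpa using h
    · have := hasChain_trans (ih h0) h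
      rwa [← Nat.succ_mul] at this

lemma hasChain_all_ge {f : X → X} {E : Set (X × X)} {s : ℕ} {a : X} (hs : 1 ≤ s)
    (h1 : HasChain f E s a a) (h2 : HasChain f E (s + 1) a a) :
    ∀ N, s * s ≤ N → HasChain f E N a a := by
  intro N hN
  set q := N / s with hqdef
  set r := N % s with hrdef
  have hr : r < s := Nat.mod_lt _ hs
  have hq : s ≤ q := (Nat.le_div_iff_mul_le hs).2 hN
  have hqr : r ≤ q := le_trans (le_of_lt hr) hq
  have h3 : (q - r) * s = q * s - r * s := Nat.sub_mul _ _ _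
  have h4 : r * s ≤ q * s := Nat.mul_le_mul_right _ hqr
  have h5 : s * q + r = N := Nat.div_add_mod N s
  have h6 : r * (s + 1) = r * s + r := Nat.mul_succ r s
  have h7 : s * q = q * s := Nat.mul_comm s q
  have hN' : N = (q - r) * s + r * (s + 1) := by omega
  rw [hN']
  rcases Nat.eq_zero_or_pos r with h0 | h0
  · rw [h0]
    simp only [Nat.sub_zero, Nat.zero_mul, Nat.add_zero]
    exact hasChain_mul h1 q (by omega)
  · exact hasChain_trans (hasChain_mul h1 (q - r) (by omega)) (hasChain_mul h2 r h0)

-- backward extraction from a hyper chain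
lemma back_aux {f : X → X} {E : Set (X × X)} :
    ∀ (m : ℕ) (Z : ℕ → Set X), (∀ i < m, hyperRel E (f '' Z i) (Z (i + 1))) →
    ∀ b ∈ Z m, ∃ z : ℕ → X, z 0 ∈ Z 0 ∧ z m = b ∧ ∀ i < m, (f (z i), z (i + 1)) ∈ E := by
  intro m
  induction m with
  | zero =>
    intro Z _ b hb
    exact ⟨fun _ => b, hb, rfl, fun i hi => absurd hi (by omega)⟩
  | succ m ih =>
    intro Z hstep b hb
    obtain ⟨u, hu, huE⟩ := (hstep m (by omega)).2 hb
    obtain ⟨a, ha, rfl⟩ := hu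
    obtain ⟨z', hz0, hzm, hchain⟩ := ih Z (fun i hi => hstep i (by omega)) a ha
    refine ⟨fun i => if i = m + 1 then b else z' i, ?_, by simp, ?_⟩
    · have : (0 : ℕ) ≠ m + 1 := by omega
      simpa [this] using hz0
    · intro i hi
      rcases Nat.lt_or_ge i m with h | h
      · have e1 : i ≠ m + 1 := by omega
        have e2 : i + 1 ≠ m + 1 := by omega
        simp only [e1, e2, if_neg, not_false_iff]
        exact hchain i h
      · have : i = m := by omega
        subst this
        have e1 : i ≠ i + 1 := by omega
        simp only [e1, if_neg, not_false_iff, if_pos]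
        rw [hzm]
        exact huE

lemma uct_of_hyper [UniformSpace X] {f : X → X} {n : ℕ} (hn : 1 ≤ n)
    (h : HyperUCT f (hyFn X n)) (a b : X) {E : Set (X × X)} (hE : E ∈ uniformity X) :
    ∃ m, 1 ≤ m ∧ HasChain f E m a b := by
  have hsing : ∀ c : X, {c} ∈ hyFn X n := fun c =>
    ⟨singleton_nonempty c, finite_singleton c, by rw [Set.ncard_singleton]; omega⟩
  obtain ⟨m, hm, Z, hZ0, hZm, _, hstep⟩ := h {a} (hsing a) {b} (hsing b) E hE
  obtain ⟨z, hz0, hzm, hchain⟩ := back_aux m Z hstep b (by rw [hZm]; exact rfl)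
  rw [hZ0, mem_singleton_iff] at hz0
  exact ⟨m, hm, z, hz0, hzm, hchain⟩

lemma mix_of_hyper [UniformSpace X] {f : X → X} {n : ℕ} (hn : 2 ≤ n)
    (h : HyperUCT f (hyFn X n)) (a b : X) {E : Set (X × X)} (hE : E ∈ uniformity X) :
    ∃ N, 1 ≤ N ∧ ∀ M, N ≤ M → HasChain f E M a b := by
  have hn1 : 1 ≤ n := by omega
  have hsing : {a} ∈ hyFn X n :=
    ⟨singleton_nonempty a, finite_singleton a, by rw [Set.ncard_singleton]; omega⟩
  have hpair : ({b, f b} : Set X) ∈ hyFn X n := by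
    refine ⟨⟨b, by simp⟩, (finite_singleton (f b)).insert b, ?_⟩
    calc ({b, f b} : Set X).ncard ≤ ({f b} : Set X).ncard + 1 := Set.ncard_insert_le _ _
      _ ≤ n := by rw [Set.ncard_singleton]; omega
  obtain ⟨m, hm, Z, hZ0, hZm, _, hstep⟩ := h {a} hsing {b, f b} hpair E hE
  obtain ⟨z1, hz10, hz1m, hc1⟩ := back_aux m Z hstep b (by rw [hZm]; left; rfl)
  obtain ⟨z2, hz20, hz2m, hc2⟩ := back_aux m Z hstep (f b) (by rw [hZm]; right; rfl)
  rw [hZ0, mem_singleton_iff] at hz10 hz20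
  have hab : HasChain f E m a b := ⟨z1, hz10, hz1m, hc1⟩
  have hafb : HasChain f E m a (f b) := ⟨z2, hz20, hz2m, hc2⟩
  have hone : HasChain f E 1 b (f b) := by
    refine ⟨fun i => if i = 0 then b else f b, by simp, by simp, ?_⟩
    intro i hi
    have : i = 0 := by omega
    subst this
    simpa using refl_mem_uniformity hE
  have hafb1 : HasChain f E (m + 1) a (f b) := hasChain_trans hab hone
  obtain ⟨t, ht1, htc⟩ := uct_of_hyper hn1 h (f b) a hE
  have hs1 : HasChain f E (m + t) a a := hasChain_trans hafb htc
  have hs2 : HasChain f E (m + t + 1) a a := by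
    have := hasChain_trans hafb1 htc
    have e : m + 1 + t = m + t + 1 := by omega
    rwa [e] at this
  refine ⟨(m + t) * (m + t) + m, by omega, fun M hM => ?_⟩
  have hloop : HasChain f E (M - m) a a :=
    hasChain_all_ge (by omega) hs1 hs2 _ (by omega)
  have := hasChain_trans hloop hab
  rwa [Nat.sub_add_cancel (by omega)] at this

lemma exists_range_eq_of_hyFn {n : ℕ} (hn : 1 ≤ n) {A : Set X} (hA : A ∈ hyFn X n) :
    ∃ g : Fin n → X, Set.range g = A := by
  obtain ⟨⟨a0, ha0⟩, hfin, hcard⟩ := hA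
  obtain ⟨s, rfl⟩ := hfin.exists_finset_coe
  set l := s.toList with hl
  have hlen : l.length ≤ n := by
    have h1 : l.length = s.card := Finset.length_toList s
    have h2 : (↑s : Set X).ncard = s.card := Set.ncard_coe_finset s
    omega
  refine ⟨fun i => if h : (i : ℕ) < l.length then l[(i : ℕ)] else a0, ?_⟩
  ext x
  simp only [Set.mem_range]
  constructor
  · rintro ⟨i, rfl⟩
    by_cases hi : (i : ℕ) < l.length
    · simp only [hi, dif_pos]
      have : l[(i : ℕ)] ∈ l := List.getElem_mem _
      exact Finset.mem_coe.2 (Finset.mem_toList.1 this)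
    · simp only [hi, dif_neg, not_false_iff]
      exact ha0
  · intro hx
    have hxl : x ∈ l := Finset.mem_toList.2 (Finset.mem_coe.1 hx)
    obtain ⟨i, hi, hix⟩ := List.getElem_of_mem hxl
    refine ⟨⟨i, by omega⟩, ?_⟩
    simp only [hi, dif_pos]
    exact hix

lemma pi_mem {n : ℕ} [UniformSpace X] {E : Set (X × X)} (hE : E ∈ uniformity X) :
    {p : (Fin n → X) × (Fin n → X) | ∀ i, (p.1 i, p.2 i) ∈ E} ∈ uniformity (Fin n → X) := by
  rw [Pi.uniformity]
  have heq : {p : (Fin n → X) × (Fin n → X) | ∀ i, (p.1 i, p.2 i) ∈ E}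
      = ⋂ i, (fun p : (Fin n → X) × (Fin n → X) => (p.1 i, p.2 i)) ⁻¹' E := by
    ext p; simp
  rw [heq]
  exact Filter.iInter_mem.2 fun i => Filter.mem_iInf_of_mem i (Filter.preimage_mem_comap hE)

lemma pi_mem_exists {n : ℕ} [UniformSpace X] {E' : Set ((Fin n → X) × (Fin n → X))}
    (hE' : E' ∈ uniformity (Fin n → X)) :
    ∃ E ∈ uniformity X,
      {p : (Fin n → X) × (Fin n → X) | ∀ i, (p.1 i, p.2 i) ∈ E} ⊆ E' := by
  rw [Pi.uniformity] at hE'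
  obtain ⟨t, ht, rfl⟩ := (Filter.mem_iInf_of_finite E').1 hE'
  choose V hV hVt using fun i => Filter.mem_comap.1 (ht i)
  refine ⟨⋂ i, V i, Filter.iInter_mem.2 hV, ?_⟩
  intro p hp
  refine Set.mem_iInter.2 fun i => hVt i ?_
  have := hp i
  exact Set.mem_iInter.1 this i

theorem stmt10' [UniformSpace X] (f : X → X) (n : ℕ) (hn : 1 ≤ n) :
    UCT (fun x : Fin n → X => fun i => f (x i)) ↔ HyperUCT f (hyFn X n) := by
  constructor
  · intro h A hA B hB E hE
    obtain ⟨a, ha⟩ := exists_range_eq_of_hyFn hn hA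
    obtain ⟨b, hb⟩ := exists_range_eq_of_hyFn hn hB
    have hDu : SetRel.symmetrize E ∈ uniformity X := symmetrize_mem_uniformity hE
    have hDE : SetRel.symmetrize E ⊆ E := SetRel.symmetrize_subset_self
    have hDsymm : (SetRel.symmetrize E).IsSymm := inferInstance
    obtain ⟨m, hm, z, hz0, hzm, hchain⟩ := h a b _ (pi_mem (n := n) hDu)
    refine ⟨m, hm, fun i => Set.range (z i), by simp only []; rw [hz0, ha], by simp only []; rw [hzm, hb], ?_, ?_⟩
    · intro i _
      haveI : Nonempty (Fin n) := ⟨⟨0, hn⟩⟩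
      refine ⟨Set.range_nonempty _, Set.finite_range _, ?_⟩
      calc (Set.range (z i)).ncard = (z i '' Set.univ).ncard := by rw [Set.image_univ]
        _ ≤ (Set.univ : Set (Fin n)).ncard := Set.ncard_image_le Set.finite_univ
        _ = n := by rw [Set.ncard_univ, Nat.card_eq_fintype_card, Fintype.card_fin]
    · intro i hi
      have hstep : ∀ j, (f (z i j), z (i + 1) j) ∈ SetRel.symmetrize E := hchain i hi
      constructor
      · rintro y ⟨x, ⟨j, rfl⟩, rfl⟩
        exact ⟨z (i + 1) j, ⟨j, rfl⟩, hDE ((SetRel.comm (R := SetRel.symmetrize E)).1 (hstep j))⟩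
      · rintro y ⟨j, rfl⟩
        exact ⟨f (z i j), ⟨z i j, ⟨j, rfl⟩, rfl⟩, hDE (hstep j)⟩
  · intro h x y E' hE'
    obtain ⟨E, hE, hsub⟩ := pi_mem_exists hE'
    have hsync : ∃ m, 1 ≤ m ∧ ∀ j : Fin n, HasChain f E m (x j) (y j) := by
      rcases eq_or_lt_of_le hn with h1 | h2
      · obtain ⟨m, hm, hc⟩ := uct_of_hyper hn h (x ⟨0, hn⟩) (y ⟨0, hn⟩) hE
        refine ⟨m, hm, fun j => ?_⟩
        have hj : j = ⟨0, hn⟩ := by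
          have := j.isLt
          ext
          omega
        rw [hj]
        exact hc
      · have hmix : ∀ j : Fin n, ∃ N, 1 ≤ N ∧ ∀ M, N ≤ M → HasChain f E M (x j) (y j) :=
          fun j => mix_of_hyper h2 h (x j) (y j) hE
        choose N hN1 hNc using hmix
        refine ⟨Finset.univ.sup N + 1, by omega, fun j => ?_⟩
        refine hNc j _ ?_
        have := Finset.le_sup (f := N) (Finset.mem_univ j)
        omega
    obtain ⟨m, hm, hc⟩ := hsync
    choose c hc0 hcm hcs using hc
    refine ⟨m, hm, fun i j => c j i, by funext j; exact hc0 j, by funext j; exact hcm j, ?_⟩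
    intro i hi
    exact hsub fun j => hcs j i hi

theorem stmt10 [UniformSpace X] [CompactSpace X] [T2Space X] (f : X → X)
    (hf : Continuous f) (n : ℕ) (hn : 1 ≤ n) :
    UCT (fun x : Fin n → X => fun i => f (x i)) ↔ HyperUCT f (hyFn X n) := stmt10' f n hn
end

section
/- Let X be a compact Hausdorff uniform space and f : X → X continuous. If f^{(n)} : X^n → X^n is uniform chain transitive for every n ≥ 1, then for every nonempty open W ⊆ X and every entourage E there is a positive integer k such that for every x ∈ X there exist w ∈ W and an E-chain of length exactly k from w to x. (That is, f is exact by uniform chains.) -/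
open Set

variable {X : Type*}

theorem stmt11 [UniformSpace X] [CompactSpace X] [T2Space X] (f : X → X)
    (hf : Continuous f)
    (h : ∀ n, 1 ≤ n → UCT (fun x : Fin n → X => fun i => f (x i))) :
    ∀ W : Set X, IsOpen W → W.Nonempty → ∀ E ∈ uniformity X,
      ∃ k, 1 ≤ k ∧ ∀ x : X, ∃ w ∈ W, HasChain f E k w x := by
  intro W _ hWne E hE
  obtain ⟨w₀, hw₀⟩ := hWne
  -- Find an open entourage D with D ∘ D ⊆ E
  obtain ⟨D₁, hD₁, hD₁E⟩ := comp_mem_uniformity_sets hE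
  obtain ⟨D, ⟨hD, hDopen⟩, hDD₁⟩ := (uniformity_hasBasis_open.mem_iff).1 hD₁
  have hDE : ∀ {a b c : X}, (a, b) ∈ D → (b, c) ∈ D → (a, c) ∈ E := fun hab hbc =>
    hD₁E ⟨_, hDD₁ hab, hDD₁ hbc⟩
  have hDsub : D ⊆ E := fun q hq => by
    have : (q.1, q.2) ∈ E := hDE hq (refl_mem_uniformity hD)
    simpa using this
  -- Finite cover of X by D-balls
  obtain ⟨t, ht⟩ := IsCompact.elim_finite_subcover isCompact_univ
    (fun x => UniformSpace.ball x D) (fun x => UniformSpace.isOpen_ball x hDopen)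
    (fun x _ => mem_iUnion.2 ⟨x, refl_mem_uniformity hD⟩)
  have htne : t.Nonempty := by
    obtain ⟨a, ha, _⟩ := mem_iUnion₂.1 (ht (mem_univ w₀))
    exact ⟨a, ha⟩
  set n := t.card with hn
  have hn1 : 1 ≤ n := Finset.card_pos.2 htne
  set p : Fin n → X := fun i => (t.equivFin.symm i : X) with hp
  -- the product entourage
  set EE : Set ((Fin n → X) × (Fin n → X)) := {q | ∀ i, (q.1 i, q.2 i) ∈ D} with hEE
  have hEEmem : EE ∈ uniformity (Fin n → X) := by
    have : EE = ⋂ i, (fun q : (Fin n → X) × (Fin n → X) => (q.1 i, q.2 i)) ⁻¹' D := by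
      ext q; simp [hEE]
    rw [this, Filter.iInter_mem]
    intro i
    rw [Pi.uniformity]
    exact Filter.mem_iInf_of_mem i (Filter.preimage_mem_comap hD)
  obtain ⟨m, hm1, z, hz0, hzm, hzstep⟩ :=
    h n hn1 (fun _ => w₀) p EE hEEmem
  refine ⟨m, hm1, fun x => ?_⟩
  obtain ⟨a, ha, hax⟩ := mem_iUnion₂.1 (ht (mem_univ x))
  set i : Fin n := t.equivFin ⟨a, ha⟩ with hi
  have hpi : p i = a := by simp [hp, hi]
  refine ⟨w₀, hw₀, fun j => if j = m then x else z j i, ?_, by simp, ?_⟩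
  · have h0 : (0 : ℕ) ≠ m := by omega
    simp [h0, hz0]
  · intro j hj
    by_cases hjm : j + 1 = m
    · have hj' : j ≠ m := by omega
      simp only [hj', if_neg, hjm, if_pos, if_true]
      have h1 : (f (z j i), z (j + 1) i) ∈ D := hzstep j hj i
      rw [hjm, hzm, hpi] at h1
      simpa [hj'] using hDE h1 hax
    · have hj' : j ≠ m := by omega
      have h1 : (f (z j i), z (j + 1) i) ∈ D := hzstep j hj i
      simpa [hj', hjm] using hDsub h1
end

section
/- Let X be a compact Hausdorff uniform space and f : X → X continuous. If f is exact by uniform chains, then f is uniform chain weakly mixing, i.e., f^{(2)} : X × X → X × X is uniform chain transitive. -/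
open Set

variable {X : Type*}

lemma hasChain_concat {f : X → X} {E : Set (X × X)} {m k : ℕ} {x y w : X}
    (h1 : HasChain f E m x y) (h2 : HasChain f E k y w) :
    HasChain f E (m + k) x w := by
  obtain ⟨z1, hz10, hz1m, hz1s⟩ := h1
  obtain ⟨z2, hz20, hz2k, hz2s⟩ := h2
  refine ⟨fun i => if i ≤ m then z1 i else z2 (i - m), by simp [hz10], ?_, ?_⟩
  · rcases Nat.eq_zero_or_pos k with hk | hk
    · subst hk
      have : z1 m = w := by rw [hz1m, ← hz20, hz2k]
      simpa using this
    · have : ¬ (m + k ≤ m) := by omega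
      simp [this, hz2k]
  · intro i hi
    rcases lt_trichotomy i m with h | h | h
    · have h1' : i ≤ m := h.le
      have h2' : i + 1 ≤ m := h
      simp only [if_pos h1', if_pos h2']
      exact hz1s i h
    · subst h
      have h2' : ¬ (i + 1 ≤ i) := by omega
      simp only [le_refl, if_pos, if_neg h2', hz1m]
      simpa [h2', hz20] using hz2s 0 (by omega)
    · have h1' : ¬ (i ≤ m) := by omega
      have h2' : ¬ (i + 1 ≤ m) := by omega
      simp only [if_neg h1', if_neg h2']
      have : i - m + 1 = i + 1 - m := by omega
      rw [← this]
      exact hz2s (i - m) (by omega)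

lemma exact_reach [UniformSpace X] {f : X → X}
    (hexact : ∀ E ∈ uniformity X, ∀ U : Set X, IsOpen U → U.Nonempty →
      ∃ n, 1 ≤ n ∧ ∀ x : X, ∃ u ∈ U, HasChain f E n u x)
    {E : Set (X × X)} (hE : E ∈ uniformity X) (x₁ : X) :
    ∃ n, 1 ≤ n ∧ ∀ x : X, HasChain f E n x₁ x := by
  set U := interior (UniformSpace.ball (f x₁) E) with hU
  have hmem : f x₁ ∈ U :=
    mem_interior_iff_mem_nhds.2 (UniformSpace.ball_mem_nhds _ hE)
  obtain ⟨n, hn1, hn⟩ := hexact E hE U isOpen_interior ⟨_, hmem⟩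
  refine ⟨n + 1, by omega, fun x => ?_⟩
  obtain ⟨u, hu, z, hz0, hzn, hzs⟩ := hn x
  refine ⟨fun i => if i = 0 then x₁ else z (i - 1), by simp, by simp [hzn], ?_⟩
  intro i hi
  rcases Nat.eq_zero_or_pos i with h | h
  · subst h
    simpa [hz0] using (by have h' := interior_subset hu; exact h' : (f x₁, u) ∈ E)
  · have h1 : ¬ i = 0 := by omega
    have h2 : ¬ i + 1 = 0 := by omega
    simp only [if_neg h1, if_neg h2]
    have : i + 1 - 1 = (i - 1) + 1 := by omega
    rw [this]
    exact hzs (i - 1) (by omega)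

lemma exact_reach_mul [UniformSpace X] {f : X → X} {E : Set (X × X)} {n : ℕ} {x₁ : X}
    (h : ∀ x : X, HasChain f E n x₁ x) :
    ∀ k, ∀ x : X, HasChain f E ((k + 1) * n) x₁ x := by
  intro k
  induction k with
  | zero => simpa using h
  | succ k ih =>
    intro x
    have : (k + 1 + 1) * n = (k + 1) * n + n := by ring
    rw [this]
    exact hasChain_concat (ih x₁) (h x)

theorem stmt12 [UniformSpace X] [CompactSpace X] [T2Space X] (f : X → X)
    (hf : Continuous f)
    (hexact : ∀ E ∈ uniformity X, ∀ U : Set X, IsOpen U → U.Nonempty →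
      ∃ n, 1 ≤ n ∧ ∀ x : X, ∃ u ∈ U, HasChain f E n u x) :
    UCT (Prod.map f f) := by
  rintro ⟨x₁, y₁⟩ ⟨x₂, y₂⟩ E hE
  -- extract a product entourage inside E
  rw [uniformity_prod_eq_comap_prod, Filter.mem_comap] at hE
  obtain ⟨t, ht, htE⟩ := hE
  rw [Filter.mem_prod_iff] at ht
  obtain ⟨F₁, hF₁, F₂, hF₂, hFt⟩ := ht
  set F := F₁ ∩ F₂ with hF
  have hFmem : F ∈ uniformity X := Filter.inter_mem hF₁ hF₂
  have hFE : ∀ a b c d : X, (a, c) ∈ F → (b, d) ∈ F → ((a, b), (c, d)) ∈ E := by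
    intro a b c d h1 h2
    exact htE (hFt ⟨h1.1, h2.2⟩)
  obtain ⟨n₁, hn₁, h₁⟩ := exact_reach hexact hFmem x₁
  obtain ⟨n₂, hn₂, h₂⟩ := exact_reach hexact hFmem y₁
  refine ⟨n₁ * n₂, Nat.one_le_iff_ne_zero.2 (by positivity), ?_⟩
  have hx : HasChain f F (n₁ * n₂) x₁ x₂ := by
    have := exact_reach_mul h₁ (n₂ - 1) x₂
    rwa [show (n₂ - 1 + 1) * n₁ = n₁ * n₂ by rw [Nat.sub_add_cancel hn₂]; ring] at this
  have hy : HasChain f F (n₁ * n₂) y₁ y₂ := by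
    have := exact_reach_mul h₂ (n₁ - 1) y₂
    rwa [show (n₁ - 1 + 1) * n₂ = n₁ * n₂ by rw [Nat.sub_add_cancel hn₁]] at this
  obtain ⟨z, hz0, hzm, hzs⟩ := hx
  obtain ⟨w, hw0, hwm, hws⟩ := hy
  exact ⟨fun i => (z i, w i), by simp [hz0, hw0], by simp [hzm, hwm],
    fun i hi => hFE _ _ _ _ (hzs i hi) (hws i hi)⟩
end

section
/- Let X be a compact Hausdorff uniform space and f : X → X continuous. If f^{(n)} : X^n → X^n is uniform chain transitive for every n ≥ 1, then f is totally uniform chain transitive, i.e., f^n : X → X is uniform chain transitive for every n ≥ 1. -/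
open Set

variable {X : Type*}

private lemma uc_iter [UniformSpace X] [CompactSpace X] (f : X → X) (hf : Continuous f) :
    ∀ n, UniformContinuous (f^[n]) := by
  intro n
  induction n with
  | zero => simpa using uniformContinuous_id
  | succ n ih =>
      rw [Function.iterate_succ]
      exact ih.comp (CompactSpace.uniformContinuous_of_continuous hf)

/-- Shadowing: a sufficiently fine `D`-chain of length `n` is `E`-shadowed by `f^[n]`. -/
private lemma shadow [UniformSpace X] [CompactSpace X] (f : X → X) (hf : Continuous f) :
    ∀ n, ∀ E ∈ uniformity X, ∃ D ∈ uniformity X,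
      ∀ z : ℕ → X, (∀ i < n, (f (z i), z (i + 1)) ∈ D) → (f^[n] (z 0), z n) ∈ E := by
  intro n
  induction n with
  | zero =>
      intro E hE
      exact ⟨E, hE, fun z _ => by simpa using refl_mem_uniformity hE⟩
  | succ n ih =>
      intro E hE
      obtain ⟨E', hE', hcomp⟩ := comp_mem_uniformity_sets hE
      obtain ⟨D1, hD1, hD1p⟩ := ih E' hE'
      have huc := uc_iter f hf n
      refine ⟨D1 ∩ ((fun p : X × X => (f^[n] p.1, f^[n] p.2)) ⁻¹' E'),
        Filter.inter_mem hD1 (huc hE'), ?_⟩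
      intro z hz
      have h1 : (f^[n] (f (z 0)), f^[n] (z 1)) ∈ E' := (hz 0 (Nat.succ_pos n)).2
      have h2 : (f^[n] (z 1), z (n + 1)) ∈ E' :=
        hD1p (fun i => z (i + 1)) (fun i hi => (hz (i + 1) (by omega)).1)
      have hmem : (f^[n] (f (z 0)), z (n + 1)) ∈ SetRel.comp E' E' := ⟨f^[n] (z 1), h1, h2⟩
      have := hcomp hmem
      simpa [Function.iterate_succ_apply] using this

private lemma chain_concat (f : X → X) (E : Set (X × X)) {a b : ℕ} {x y w : X}
    (h1 : HasChain f E a x y) (h2 : HasChain f E b y w) : HasChain f E (a + b) x w := by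
  obtain ⟨z1, hz10, hz1a, hz1⟩ := h1
  obtain ⟨z2, hz20, hz2b, hz2⟩ := h2
  refine ⟨fun i => if i < a then z1 i else z2 (i - a), ?_, ?_, ?_⟩
  · by_cases h : 0 < a
    · simp [h, hz10]
    · have ha : a = 0 := by omega
      have hx : z2 0 = x := by rw [hz20, ← hz1a, ha, hz10]
      simpa [ha] using hx
  · have hnl : ¬ a + b < a := by omega
    simp only [if_neg hnl, Nat.add_sub_cancel_left, hz2b]
  · intro i hi
    by_cases h1' : i < a
    · by_cases h2' : i + 1 < a
      · simpa [h1', h2'] using hz1 i h1'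
      · have hia : i + 1 = a := by omega
        have hii : i + 1 - a = 0 := by omega
        simp only [if_pos h1', if_neg h2', hii]
        rw [hz20, ← hz1a, ← hia]
        exact hz1 i h1'
    · have h2' : ¬ i + 1 < a := by omega
      simp only [if_neg h1', if_neg h2']
      have he : i + 1 - a = (i - a) + 1 := by omega
      rw [he]
      exact hz2 (i - a) (by omega)

private lemma chain_loop (f : X → X) (E : Set (X × X)) {b : ℕ} {y : X}
    (h : HasChain f E b y y) : ∀ k, HasChain f E (k * b) y y := by
  intro k
  induction k with
  | zero => exact ⟨fun _ => y, rfl, rfl, fun i hi => absurd hi (by simp)⟩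
  | succ k ih =>
      have := chain_concat f E ih h
      simpa [Nat.succ_mul] using this

/-- From chain transitivity of the 2-fold product: chains of two consecutive lengths. -/
private lemma two_lengths [UniformSpace X] (f : X → X)
    (h2 : UCT (fun x : Fin 2 → X => fun i => f (x i)))
    (x y : X) (D : Set (X × X)) (hD : D ∈ uniformity X) :
    ∃ m, 1 ≤ m ∧ HasChain f D m x y ∧ HasChain f D (m + 1) x y := by
  set S : Set ((Fin 2 → X) × (Fin 2 → X)) := {p | ∀ i, (p.1 i, p.2 i) ∈ D} with hSdef
  have hS : S ∈ uniformity (Fin 2 → X) := by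
    have hSe : S = ⋂ i, (fun p : (Fin 2 → X) × (Fin 2 → X) => (p.1 i, p.2 i)) ⁻¹' D := by
      ext p; simp [hSdef]
    rw [hSe]
    exact Filter.iInter_mem.2 fun i => by
      rw [Pi.uniformity]
      exact Filter.mem_iInf_of_mem i (Filter.preimage_mem_comap hD)
  obtain ⟨m, hm, Z, hZ0, hZm, hZ⟩ :=
    h2 (fun i => if i = 0 then x else f x) (fun _ => y) S hS
  refine ⟨m, hm, ?_, ?_⟩
  · exact ⟨fun i => Z i 0, by simpa using congrFun hZ0 0, by simpa using congrFun hZm 0,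
      fun i hi => hZ i hi 0⟩
  · refine ⟨fun i => if i = 0 then x else Z (i - 1) 1, by simp, ?_, ?_⟩
    · have hne : m + 1 ≠ 0 := by omega
      have : Z m 1 = y := congrFun hZm 1
      simp only [if_neg hne, Nat.add_sub_cancel]
      exact this
    · intro i hi
      by_cases h0 : i = 0
      · subst h0
        have hmem : (f x, Z 0 1) ∈ D := by
          have : Z 0 1 = f x := by rw [hZ0]; simp [Fin.ext_iff]
          rw [this]
          exact refl_mem_uniformity hD
        simpa using hmem
      · have hi1 : i - 1 < m := by omega
        have hstep := hZ (i - 1) hi1 1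
        have he : i + 1 - 1 = (i - 1) + 1 := by omega
        simp only [if_neg h0, if_neg (show ¬ i + 1 = 0 by omega), he]
        exact hstep

/-- Chains of length an exact multiple of `n`. -/
private lemma mult_chain [UniformSpace X] (f : X → X)
    (h2 : UCT (fun x : Fin 2 → X => fun i => f (x i)))
    (x y : X) (D : Set (X × X)) (hD : D ∈ uniformity X) (n : ℕ) (hn : 1 ≤ n) :
    ∃ m, 1 ≤ m ∧ HasChain f D (n * m) x y := by
  obtain ⟨a, _, hca, _⟩ := two_lengths f h2 x y D hD
  obtain ⟨b, hb1, hcb, hcb1⟩ := two_lengths f h2 y y D hD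
  set r := (n - a % n) % n with hr
  have hrlt : r < n := Nat.mod_lt _ (by omega)
  have hdvd : n ∣ a + r := by
    rcases Nat.eq_zero_or_pos (a % n) with h0 | h0
    · have hr0 : r = 0 := by
        rw [hr, h0, Nat.sub_zero, Nat.mod_self]
      rw [hr0, Nat.add_zero]
      exact Nat.dvd_of_mod_eq_zero h0
    · have hlt : n - a % n < n := by omega
      have hr' : r = n - a % n := by rw [hr, Nat.mod_eq_of_lt hlt]
      have harn : a % n + r = n := by
        have := Nat.mod_lt a (show 0 < n by omega)
        omega
      refine Nat.dvd_of_mod_eq_zero ?_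
      calc (a + r) % n = (a % n + r % n) % n := Nat.add_mod a r n
        _ = (a % n + r) % n := by rw [Nat.mod_eq_of_lt hrlt]
        _ = n % n := by rw [harn]
        _ = 0 := Nat.mod_self n
  have hlen : (n - r) * b + r * (b + 1) = n * b + r := by
    have h1 : (n - r) + r = n := Nat.sub_add_cancel (le_of_lt hrlt)
    calc (n - r) * b + r * (b + 1) = ((n - r) + r) * b + r := by ring
      _ = n * b + r := by rw [h1]
  have hchain : HasChain f D (a + ((n - r) * b + r * (b + 1))) x y := by
    have hloop : HasChain f D ((n - r) * b + r * (b + 1)) y y :=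
      chain_concat f D (chain_loop f D hcb (n - r)) (chain_loop f D hcb1 r)
    exact chain_concat f D hca hloop
  set N := a + ((n - r) * b + r * (b + 1)) with hNdef
  have hNd : n ∣ N := by
    have : N = (a + r) + n * b := by rw [hNdef, hlen]; ring
    rw [this]
    exact Nat.dvd_add hdvd ⟨b, rfl⟩
  obtain ⟨m, hm⟩ := hNd
  refine ⟨m, ?_, by rwa [← hm]⟩
  have hNge : n ≤ N := by
    have : n * b ≤ N := by rw [hNdef, hlen]; omega
    have : n * 1 ≤ n * b := Nat.mul_le_mul_left n hb1
    omega
  by_contra hm0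
  have : m = 0 := by omega
  rw [this, Nat.mul_zero] at hm
  omega

theorem stmt13 [UniformSpace X] [CompactSpace X] [T2Space X] (f : X → X)
    (hf : Continuous f)
    (h : ∀ n, 1 ≤ n → UCT (fun x : Fin n → X => fun i => f (x i))) :
    ∀ n, 1 ≤ n → UCT (f^[n]) := by
  intro n hn x y E hE
  obtain ⟨D, hD, hshadow⟩ := shadow f hf n E hE
  obtain ⟨m, hm, z, hz0, hzN, hz⟩ :=
    mult_chain f (h 2 (by norm_num)) x y D hD n hn
  refine ⟨m, hm, fun j => z (n * j), by simpa using hz0, by simpa using hzN, ?_⟩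
  intro j hj
  have hkey := hshadow (fun i => z (n * j + i)) (fun i hi => by
    have hms : n * (j + 1) = n * j + n := Nat.mul_succ n j
    have hle : n * (j + 1) ≤ n * m := Nat.mul_le_mul_left n (by omega)
    exact hz (n * j + i) (by omega))
  have hs : n * j + n = n * (j + 1) := (Nat.mul_succ n j).symm
  simpa [hs] using hkey
end

section
/- Let X be a nonempty compact connected uniform space and f : X → X continuous and uniform chain transitive. Then for any two nonempty proper disjoint open subsets V, W of X, it is not the case that both cl(f(V)) ⊆ W and cl(f(W)) ⊆ V hold. -/
open Set

variable {X : Type*}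

theorem stmt15 [UniformSpace X] [Nonempty X] [CompactSpace X] [ConnectedSpace X]
    (f : X → X) (hf : Continuous f) (huct : UCT f)
    (V W : Set X) (hV : IsOpen V) (hW : IsOpen W)
    (hVne : V.Nonempty) (hWne : W.Nonempty)
    (hVp : V ≠ Set.univ) (hWp : W ≠ Set.univ) (hd : Disjoint V W) :
    ¬ (closure (f '' V) ⊆ W ∧ closure (f '' W) ⊆ V) := by
  rintro ⟨h1, h2⟩
  -- there is a point outside V ∪ W
  obtain ⟨z, hz⟩ : ∃ z : X, z ∉ V ∪ W := by
    by_contra hc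
    push_neg at hc
    obtain ⟨p, -, hpV, hpW⟩ := isPreconnected_univ (u := V) (v := W) hV hW
      (fun x _ => hc x)
      ⟨hVne.choose, trivial, hVne.choose_spec⟩ ⟨hWne.choose, trivial, hWne.choose_spec⟩
    exact hd.le_bot ⟨hpV, hpW⟩
  -- Lebesgue entourages
  have hK1 : IsCompact (closure (f '' V)) := isClosed_closure.isCompact
  have hK2 : IsCompact (closure (f '' W)) := isClosed_closure.isCompact
  obtain ⟨E1, hE1u, hE1⟩ := lebesgue_number_lemma (ι := Unit) (U := fun _ => W) hK1
    (fun _ => hW) (by rw [iUnion_const]; exact h1)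
  obtain ⟨E2, hE2u, hE2⟩ := lebesgue_number_lemma (ι := Unit) (U := fun _ => V) hK2
    (fun _ => hV) (by rw [iUnion_const]; exact h2)
  have hEu : E1 ∩ E2 ∈ uniformity X := Filter.inter_mem hE1u hE2u
  obtain ⟨x, hx⟩ := hVne
  obtain ⟨m, hm1, c, hc0, hcm, hcstep⟩ := huct x z (E1 ∩ E2) hEu
  have key : ∀ i ≤ m, c i ∈ V ∪ W := by
    intro i hi
    induction i with
    | zero => exact Or.inl (hc0 ▸ hx)
    | succ n ih =>
      have hn : c n ∈ V ∪ W := ih (Nat.le_of_succ_le hi)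
      have hstep := hcstep n (Nat.lt_of_succ_le hi)
      rcases hn with hn | hn
      · have hmem : f (c n) ∈ closure (f '' V) := subset_closure ⟨c n, hn, rfl⟩
        obtain ⟨_, hball⟩ := hE1 _ hmem
        exact Or.inr (hball hstep.1)
      · have hmem : f (c n) ∈ closure (f '' W) := subset_closure ⟨c n, hn, rfl⟩
        obtain ⟨_, hball⟩ := hE2 _ hmem
        exact Or.inl (hball hstep.2)
  exact hz (hcm ▸ key m le_rfl)
end

section
/- Let (X, 𝒰) be a compact uniform space with finitely many connected components and f : X → X continuous. If f_2 : F_2(X) → F_2(X) is uniform chain transitive, then X is connected. -/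
open Set

variable {X : Type*}

lemma openComp [TopologicalSpace X] [Finite (ConnectedComponents X)] (x : X) :
    IsOpen (connectedComponent x) := by
  rw [← connectedComponents_preimage_singleton]
  have : IsClosed (ConnectedComponents.mk ⁻¹' ({ConnectedComponents.mk x}ᶜ : Set (ConnectedComponents X))) := by
    have : (ConnectedComponents.mk ⁻¹' ({ConnectedComponents.mk x}ᶜ : Set (ConnectedComponents X)))
        = ⋃ c ∈ ({ConnectedComponents.mk x}ᶜ : Set (ConnectedComponents X)),
          ConnectedComponents.mk ⁻¹' {c} := by
      ext y; simp
    rw [this]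
    exact Set.Finite.isClosed_biUnion (Set.toFinite _) fun c _ => by
      obtain ⟨y, rfl⟩ := ConnectedComponents.surjective_coe c
      rw [connectedComponents_preimage_singleton]; exact isClosed_connectedComponent
  have h2 := this.isOpen_compl
  rwa [← preimage_compl, compl_compl] at h2

theorem stmt16 [UniformSpace X] [Nonempty X] [CompactSpace X]
    [Finite (ConnectedComponents X)] (f : X → X) (hf : Continuous f)
    (h : HyperUCT f (hyFn X 2)) : ConnectedSpace X := by
  set V : Set (X × X) := {p | connectedComponent p.1 = connectedComponent p.2} with hV
  have hVopen : IsOpen V := by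
    have : V = ⋃ x : ConnectedComponents X,
        (ConnectedComponents.mk ⁻¹' {x}) ×ˢ (ConnectedComponents.mk ⁻¹' {x}) := by
      ext ⟨a, b⟩
      simp only [hV, mem_setOf_eq, mem_iUnion, mem_prod, mem_preimage, mem_singleton_iff]
      constructor
      · intro hab; exact ⟨ConnectedComponents.mk a, rfl, (ConnectedComponents.coe_eq_coe.2 hab).symm⟩
      · rintro ⟨c, h1, h2⟩; exact ConnectedComponents.coe_eq_coe.1 (h1.trans h2.symm)
    rw [this]
    exact isOpen_iUnion fun c => by
      obtain ⟨y, rfl⟩ := ConnectedComponents.surjective_coe c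
      rw [connectedComponents_preimage_singleton]
      exact (openComp y).prod (openComp y)
  have hVmem : V ∈ uniformity X := by
    rw [← nhdsSet_diagonal_eq_uniformity]
    exact hVopen.mem_nhdsSet.2 (by rintro ⟨a, b⟩ ⟨rfl⟩; rfl)
  -- main claim: all points share a component
  have key : ∀ x y : X, connectedComponent x = connectedComponent y := by
    intro x y
    have hA : ({x} : Set X) ∈ hyFn X 2 := ⟨singleton_nonempty x, finite_singleton x, by
      simp [Set.ncard_singleton]⟩
    have hB : ({x, y} : Set X) ∈ hyFn X 2 := ⟨⟨x, by simp⟩, (finite_singleton x).insert y |>.subset (by simp [pair_comm]), by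
      exact (Set.ncard_insert_le x {y}).trans (by simp [Set.ncard_singleton])⟩
    obtain ⟨m, -, Z, hZ0, hZm, -, hstep⟩ := h _ hA _ hB V hVmem
    have inv : ∀ i ≤ m, ∀ u ∈ Z i, ∀ v ∈ Z i, connectedComponent u = connectedComponent v := by
      intro i
      induction i with
      | zero => intro _ u hu v hv; rw [hZ0] at hu hv
                simp at hu hv; rw [hu, hv]
      | succ i ih =>
        intro hi u hu v hv
        have hstepi := hstep i (lt_of_lt_of_le (Nat.lt_succ_self i) hi)
        obtain ⟨a, ⟨a', ha', rfl⟩, hau⟩ := hstepi.2 hu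
        obtain ⟨b, ⟨b', hb', rfl⟩, hbv⟩ := hstepi.2 hv
        have hab : connectedComponent (f a') = connectedComponent (f b') := by
          have h1 := ih (le_of_lt (lt_of_lt_of_le (Nat.lt_succ_self i) hi)) a' ha' b' hb'
          have : f b' ∈ connectedComponent (f a') := by
            apply hf.image_connectedComponent_subset a'
            exact ⟨b', h1 ▸ mem_connectedComponent, rfl⟩
          exact connectedComponent_eq this
        calc connectedComponent u = connectedComponent (f a') := hau.symm
          _ = connectedComponent (f b') := hab
          _ = connectedComponent v := hbv
    have := inv m le_rfl x (hZm ▸ (by simp : x ∈ ({x,y}:Set X))) y (hZm ▸ (by simp : y ∈ ({x,y}:Set X)))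
    exact this
  inhabit X
  have : connectedComponent (default : X) = univ :=
    eq_univ_of_forall fun y => (key default y) ▸ mem_connectedComponent
  rw [connectedSpace_iff_connectedComponent]
  exact ⟨default, this⟩
end

section
/- Let (X, 𝒰) be a uniform space and f : X → X continuous. If the induced map C(f) on C(X), the hyperspace of nonempty closed connected subsets of X, is uniform chain transitive, then f is uniform chain transitive. -/
open Set

variable {X : Type*}

theorem stmt17 [UniformSpace X] (f : X → X) (hf : Continuous f)
    (h : HyperUCT f (hyConn (X := X))) : UCT f := by
  classical
  intro x y E hE
  obtain ⟨D, hD, hDsymm, hDD⟩ := comp_symm_mem_uniformity_sets hE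
  have hA : closure {x} ∈ hyConn (X := X) :=
    ⟨isClosed_closure, isConnected_singleton.closure⟩
  have hB : closure {y} ∈ hyConn (X := X) :=
    ⟨isClosed_closure, isConnected_singleton.closure⟩
  obtain ⟨m, hm, Z, hZ0, hZm, hZS, hZstep⟩ := h _ hA _ hB D hD
  -- build the point chain by recursion with choice
  let g : ℕ → X := fun n => Nat.rec x (fun i p =>
    if hex : ∃ b ∈ Z (i+1), (b, f p) ∈ D then hex.choose else x) n
  have hg0 : g 0 = x := rfl
  have hmem : ∀ i ≤ m, g i ∈ Z i ∧ (∀ j, i = j + 1 → (f (g j), g i) ∈ D) := by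
    intro i hi
    induction i with
    | zero =>
      refine ⟨?_, by intro j hj; omega⟩
      rw [hg0, hZ0]; exact subset_closure rfl
    | succ i ih =>
      obtain ⟨hmemi, -⟩ := ih (by omega)
      have hex : ∃ b ∈ Z (i+1), (b, f (g i)) ∈ D :=
        (hZstep i (by omega)).1 ⟨g i, hmemi, rfl⟩
      have hg : g (i+1) = hex.choose := by
        show (if hex' : ∃ b ∈ Z (i+1), (b, f (g i)) ∈ D then hex'.choose else x) = hex.choose
        rw [dif_pos hex]
      refine ⟨by rw [hg]; exact hex.choose_spec.1, ?_⟩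
      intro j hj
      have hji : j = i := by omega
      subst hji
      rw [hg]
      exact hDsymm.symm _ _ hex.choose_spec.2
  -- last point is D-close to y
  have hlast : (g m, y) ∈ D := by
    have hcl : g m ∈ closure ({y} : Set X) := by rw [← hZm]; exact (hmem m le_rfl).1
    have hb : UniformSpace.ball (g m) D ∈ nhds (g m) := UniformSpace.ball_mem_nhds _ hD
    obtain ⟨w, hw1, hw2⟩ := (mem_closure_iff_nhds.mp hcl) _ hb
    rw [mem_singleton_iff] at hw2
    rw [← hw2]; exact hw1
  refine ⟨m, hm, fun i => if i = m then y else g i, ?_, by simp, ?_⟩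
  · have h0 : (0:ℕ) ≠ m := by omega
    simp [h0, hg0]
  · intro i hi
    have hine : i ≠ m := by omega
    simp only [hine, if_neg, if_false]
    by_cases hsucc : i + 1 = m
    · have h1 : (f (g i), g (i+1)) ∈ D := (hmem (i+1) (by omega)).2 i rfl
      have h2 : (g (i+1), y) ∈ D := by rw [hsucc]; exact hlast
      simp only [hsucc, if_pos]
      exact hDD ⟨g (i+1), h1, h2⟩
    · simp only [hsucc, if_neg, if_false]
      have h1 : (f (g i), g (i+1)) ∈ D := (hmem (i+1) (by omega)).2 i rfl
      exact hDD ⟨g (i+1), h1, refl_mem_uniformity hD⟩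
end
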